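/- arXiv:1902.03998 — 10 statements merged into one kernel-verified Lean document; each statement's English description precedes it below -/
import Mathlib

section
/- For all real numbers r > 0, r' > 0 and every real number R, one has (cosh r · cosh r' − cosh R)/(sinh r · sinh r') = 1 − 2·e^{−(r+r'−R)} · ((1 − e^{r−r'−R})(1 − e^{r'−r−R})) / ((1 − e^{−2r})(1 − e^{−2r'})). -/
theorem stmt0 (r r' R : ℝ) (hr : 0 < r) (hr' : 0 < r') :
    (Real.cosh r * Real.cosh r' - Real.cosh R) / (Real.sinh r * Real.sinh r') =
      1 - 2 * Real.exp (-(r + r' - R)) *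
          ((1 - Real.exp (r - r' - R)) * (1 - Real.exp (r' - r - R))) /
          ((1 - Real.exp (-(2 * r))) * (1 - Real.exp (-(2 * r')))) := by
  have h1 : Real.sinh r ≠ 0 := ne_of_gt (Real.sinh_pos_iff.2 hr)
  have h2 : Real.sinh r' ≠ 0 := ne_of_gt (Real.sinh_pos_iff.2 hr')
  have h3 : (1 - Real.exp (-(2*r))) ≠ 0 := by
    have := Real.exp_lt_one_iff.2 (show -(2*r) < 0 by linarith); linarith
  have h4 : (1 - Real.exp (-(2*r'))) ≠ 0 := by
    have := Real.exp_lt_one_iff.2 (show -(2*r') < 0 by linarith); linarith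
  have hx := Real.exp_ne_zero r
  have hy := Real.exp_ne_zero r'
  have hz := Real.exp_ne_zero R
  rw [show r - r' - R = r + -r' + -R by ring, show r' - r - R = r' + -r + -R by ring,
    show -(r+r'-R) = -r + -r' + R by ring, show -(2*r) = -r + -r by ring,
    show -(2*r') = -r' + -r' by ring] at *
  simp only [Real.cosh_eq, Real.sinh_eq, Real.exp_add, Real.exp_neg] at *
  field_simp at *
  have h5 : Real.exp r ^ 2 - 1 ≠ 0 := fun h => h3 (by rw [h, zero_div])
  have h6 : Real.exp r' ^ 2 - 1 ≠ 0 := fun h => h4 (by rw [h, zero_div])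
  have h7 : (1 - Real.exp r ^ 2 + Real.exp r ^ 2 * Real.exp r' ^ 2 - Real.exp r' ^ 2) ≠ 0 := by
    have := mul_ne_zero h5 h6
    intro h; apply this; linear_combination h
  field_simp
  ring
end

section
/- For every ε ∈ (0, 1/3) there exists C > 0 such that for every R > C and all r, r' ∈ [0, R] with r + r' > R + C, the quantity Δ(r,r') := (1/2)·e^{R/2}·arccos((cosh r · cosh r' − cosh R)/(sinh r · sinh r')) satisfies (1 − ε)·e^{(y+y')/2} ≤ Δ(r,r') ≤ (1 + ε)·e^{(y+y')/2}, where y := R − r and y' := R − r'. -/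
set_option maxHeartbeats 1000000

private lemma arcsin_le_aux (u : ℝ) (h0 : 0 ≤ u) (h1 : u ≤ 1/2) :
    Real.arcsin u ≤ u * (1 + u^2) := by
  rcases eq_or_lt_of_le h0 with h | h
  · simp [← h]
  · have hu1 : u < 1 := by linarith
    have hlt : Real.arcsin u < Real.tan (Real.arcsin u) :=
      Real.lt_tan (Real.arcsin_pos.2 h) (Real.arcsin_lt_pi_div_two.2 hu1)
    rw [Real.tan_arcsin] at hlt
    set w := Real.sqrt (1 - u^2) with hw
    have hw2 : w^2 = 1 - u^2 := Real.sq_sqrt (by nlinarith)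
    have hw0 : 0 < w := Real.sqrt_pos.2 (by nlinarith)
    have hexpand : ((1 + u^2) * w)^2 = (1 + u^2)^2 * (1 - u^2) := by
      rw [mul_pow, hw2]
    have hu14 : u^2 ≤ 1/4 := by nlinarith
    have h4 : u^2*u^2 ≤ (1/4)*(1/4) := mul_le_mul hu14 hu14 (sq_nonneg u) (by norm_num)
    have hA : u^2*u^2 ≤ u^2*(1/4) := mul_le_mul_of_nonneg_left hu14 (sq_nonneg u)
    have hB : u^2*(u^2*u^2) ≤ u^2*(1/16) := by
      have h5 : u^2*u^2 ≤ 1/16 := by linarith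
      exact mul_le_mul_of_nonneg_left h5 (sq_nonneg u)
    have ha2 : 1 ≤ ((1 + u^2) * w)^2 := by rw [hexpand]; nlinarith [sq_nonneg u]
    have ha : 1 ≤ (1 + u^2) * w := by
      nlinarith [mul_pos (show (0:ℝ) < 1 + u^2 by positivity) hw0]
    have hfin : u / w ≤ u * (1 + u^2) := by
      rw [div_le_iff₀ hw0]
      nlinarith
    linarith

private lemma le_arcsin_aux (u : ℝ) (h0 : 0 ≤ u) (h1 : u ≤ 1/2) : u ≤ Real.arcsin u := by
  have hs := Real.sin_arcsin (by linarith : (-1:ℝ) ≤ u) (by linarith : u ≤ 1)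
  have h2 : Real.sin (Real.arcsin u) ≤ Real.arcsin u :=
    Real.sin_le (Real.arcsin_nonneg.2 h0)
  linarith

private lemma one_le_q_exp (a C q : ℝ) (hC : C ≤ a) (heC : Real.exp (-C) = q) :
    1 ≤ q * Real.exp a := by
  have h : Real.exp (-C) * Real.exp C = 1 := by rw [← Real.exp_add]; simp
  have h3 : Real.exp C ≤ Real.exp a := Real.exp_le_exp.2 hC
  have hq : 0 < q := heC ▸ Real.exp_pos _
  nlinarith [Real.exp_pos C]

private lemma negexp_aux (a q : ℝ) (h : 1 ≤ q * Real.exp a) :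
    Real.exp (-a) ≤ q^2 * Real.exp a := by
  have hinv : Real.exp a * Real.exp (-a) = 1 := by rw [← Real.exp_add]; simp
  nlinarith [Real.exp_pos a, Real.exp_pos (-a)]

private lemma qfact1 (q : ℝ) (h0 : 0 < q) (h1 : q < 1/300) : 0 < 1 - q^2 := by nlinarith

private lemma qfact2 (q : ℝ) (h0 : 0 < q) (h1 : q < 1/300) : 0 < 1 - 3*q := by nlinarith

private lemma qfact3 (q : ℝ) (h0 : 0 < q) (h1 : q < 1/300) : 4*q^2 ≤ q := by nlinarith

private lemma qfact4 (q : ℝ) (h0 : 0 < q) (h1 : q < 1/300) :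
    1 + q^2 ≤ (1 + 4*q) * (1 - q^2)^2 := by
  have h2 : q^2 ≤ q * (1/300) := by nlinarith
  have h3 : q^3 ≤ q^2 * (1/300) := by nlinarith [pow_pos h0 2]
  have h4 : (0:ℝ) ≤ q^4 := by positivity
  have h5 : (0:ℝ) ≤ q^5 := by positivity
  nlinarith [h2, h3, h4, h5]

private lemma sqrt_lb_aux (t : ℝ) (h0 : 0 ≤ t) (h1 : t ≤ 1) : t ≤ Real.sqrt t := by
  rw [Real.le_sqrt h0 h0]; nlinarith

private lemma sqrt_ub_aux (q : ℝ) (h0 : 0 ≤ q) : Real.sqrt (1 + 4*q) ≤ 1 + 2*q := by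
  calc Real.sqrt (1 + 4*q) ≤ Real.sqrt ((1 + 2*q)^2) := Real.sqrt_le_sqrt (by nlinarith)
  _ = 1 + 2*q := Real.sqrt_sq (by linarith)

theorem stmt2 (ε : ℝ) (hε : ε ∈ Set.Ioo (0 : ℝ) (1 / 3)) :
    ∃ C : ℝ, 0 < C ∧ ∀ R : ℝ, C < R → ∀ r ∈ Set.Icc (0 : ℝ) R, ∀ r' ∈ Set.Icc (0 : ℝ) R,
      R + C < r + r' →
        (1 - ε) * Real.exp (((R - r) + (R - r')) / 2) ≤
            (1 / 2) * Real.exp (R / 2) *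
              Real.arccos
                ((Real.cosh r * Real.cosh r' - Real.cosh R) / (Real.sinh r * Real.sinh r')) ∧
          (1 / 2) * Real.exp (R / 2) *
              Real.arccos
                ((Real.cosh r * Real.cosh r' - Real.cosh R) / (Real.sinh r * Real.sinh r')) ≤
            (1 + ε) * Real.exp (((R - r) + (R - r')) / 2) := by
  obtain ⟨hε0, hε3⟩ := hε
  set q : ℝ := ε / 100 with hqdef
  have hq0 : 0 < q := by positivity
  have hq1 : q < 1 / 300 := by rw [hqdef]; linarith
  have hq2 := qfact1 q hq0 hq1
  have hq3 := qfact2 q hq0 hq1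
  have hq4 := qfact3 q hq0 hq1
  have hq5 := qfact4 q hq0 hq1
  have h100 : (1:ℝ) < 100 / ε := by rw [lt_div_iff₀ hε0]; linarith
  refine ⟨Real.log (100 / ε), Real.log_pos h100, ?_⟩
  intro R hR r hrIcc r' hr'Icc hsum
  obtain ⟨hr0, hrR⟩ := hrIcc
  obtain ⟨hr'0, hr'R⟩ := hr'Icc
  set C := Real.log (100 / ε) with hCdef
  have hC0 : 0 < C := Real.log_pos h100
  have heC : Real.exp (-C) = q := by
    rw [Real.exp_neg, Real.exp_log (by positivity), inv_div]
  have hCr : C < r := by linarith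
  have hCr' : C < r' := by linarith
  -- exponential facts
  have herq : 1 ≤ q * Real.exp r := one_le_q_exp r C q hCr.le heC
  have her'q : 1 ≤ q * Real.exp r' := one_le_q_exp r' C q hCr'.le heC
  have heRq : 1 ≤ q * Real.exp R := one_le_q_exp R C q hR.le heC
  have hnegr : Real.exp (-r) ≤ q^2 * Real.exp r := negexp_aux r q herq
  have hnegr' : Real.exp (-r') ≤ q^2 * Real.exp r' := negexp_aux r' q her'q
  have hnegR : Real.exp (-R) ≤ q^2 * Real.exp R := negexp_aux R q heRq
  -- sinh bounds
  have hs_r_low : Real.exp r * (1 - q^2) / 2 ≤ Real.sinh r := by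
    rw [Real.sinh_eq]; linarith [hnegr]
  have hs_r'_low : Real.exp r' * (1 - q^2) / 2 ≤ Real.sinh r' := by
    rw [Real.sinh_eq]; linarith [hnegr']
  have hs_r_up : Real.sinh r ≤ Real.exp r / 2 := by
    rw [Real.sinh_eq]; linarith [Real.exp_pos (-r)]
  have hs_r'_up : Real.sinh r' ≤ Real.exp r' / 2 := by
    rw [Real.sinh_eq]; linarith [Real.exp_pos (-r')]
  have hs_r_pos : 0 < Real.sinh r := Real.sinh_pos_iff.2 (by linarith)
  have hs_r'_pos : 0 < Real.sinh r' := Real.sinh_pos_iff.2 (by linarith)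
  set D := Real.sinh r * Real.sinh r' with hDdef
  have hD_pos : 0 < D := mul_pos hs_r_pos hs_r'_pos
  have hD_up : D ≤ Real.exp r * Real.exp r' / 4 := by
    rw [hDdef]
    calc Real.sinh r * Real.sinh r' ≤ (Real.exp r / 2) * (Real.exp r' / 2) :=
          mul_le_mul hs_r_up hs_r'_up hs_r'_pos.le (by positivity)
      _ = Real.exp r * Real.exp r' / 4 := by ring
  have hD_low : Real.exp r * Real.exp r' * (1 - q^2)^2 / 4 ≤ D := by
    rw [hDdef]
    calc Real.exp r * Real.exp r' * (1 - q^2)^2 / 4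
        = (Real.exp r * (1 - q^2) / 2) * (Real.exp r' * (1 - q^2) / 2) := by ring
      _ ≤ Real.sinh r * Real.sinh r' :=
          mul_le_mul hs_r_low hs_r'_low (by positivity) hs_r_pos.le
  -- cosh bounds
  set A := Real.cosh R - Real.cosh (r - r') with hAdef
  have hcoshd_up : Real.cosh (r - r') ≤ q * Real.exp R := by
    have h1 : Real.exp (r - r') ≤ Real.exp ((R - r) + (R - r')) :=
      Real.exp_le_exp.2 (by linarith)
    have h2 : Real.exp (-(r - r')) ≤ Real.exp ((R - r) + (R - r')) :=
      Real.exp_le_exp.2 (by linarith)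
    have h3 : Real.exp ((R - r) + (R - r')) ≤ Real.exp (R - C) :=
      Real.exp_le_exp.2 (by linarith)
    have h4 : Real.exp (R - C) = q * Real.exp R := by
      rw [← heC, ← Real.exp_add]; congr 1; ring
    rw [Real.cosh_eq]; linarith
  have hA_low : Real.exp R * (1 - 2*q) / 2 ≤ A := by
    rw [hAdef, Real.cosh_eq]
    linarith [Real.exp_pos (-R), hcoshd_up]
  have hA_up : A ≤ Real.exp R * (1 + q^2) / 2 := by
    rw [hAdef, Real.cosh_eq]
    have h1 : (0:ℝ) < Real.cosh (r - r') := Real.cosh_pos _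
    linarith [hnegR]
  set E := Real.exp (R - r - r') with hEdef
  have hE_pos : 0 < E := Real.exp_pos _
  have hEq : E ≤ q := by
    rw [hEdef, ← heC]; exact Real.exp_le_exp.2 (by linarith)
  have hERE : E * (Real.exp r * Real.exp r') = Real.exp R := by
    rw [hEdef, ← Real.exp_add, ← Real.exp_add]; congr 1; ring
  -- the quantity x and T
  set x := (Real.cosh r * Real.cosh r' - Real.cosh R) / D with hxdef
  set T := (1 - x) / 2 with hTdef
  have hxA : (1 - x) * D = A := by
    rw [hxdef, hAdef]
    field_simp
    have hcs := Real.cosh_sub r r'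
    rw [hDdef]; linarith
  have hTA : T * (2 * D) = A := by rw [hTdef]; linarith [hxA]
  have hT_low : E * (1 - 3*q) ≤ T := by
    have key : E * (1 - 3*q) * (2 * D) ≤ A := by
      have h1 : E * (1 - 3*q) * (2 * D) ≤ E * (1 - 3*q) * (2 * (Real.exp r * Real.exp r' / 4)) :=
        mul_le_mul_of_nonneg_left (by linarith) (mul_nonneg hE_pos.le (by linarith))
      have h2 : E * (1 - 3*q) * (2 * (Real.exp r * Real.exp r' / 4))
          = Real.exp R * (1 - 3*q) / 2 := by rw [← hERE]; ring
      have h3 : Real.exp R * (1 - 3*q) / 2 ≤ Real.exp R * (1 - 2*q) / 2 := by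
        have := mul_le_mul_of_nonneg_left (show 1 - 3*q ≤ 1 - 2*q by linarith)
          (Real.exp_pos R).le
        linarith
      linarith
    rw [← hTA] at key
    exact le_of_mul_le_mul_right key (by linarith)
  have hT_up : T ≤ E * (1 + 4*q) := by
    have key : A ≤ E * (1 + 4*q) * (2 * D) := by
      have h1 : E * (1 + 4*q) * (2 * (Real.exp r * Real.exp r' * (1 - q^2)^2 / 4))
          ≤ E * (1 + 4*q) * (2 * D) :=
        mul_le_mul_of_nonneg_left (by linarith) (mul_nonneg hE_pos.le (by linarith))
      have h2 : E * (1 + 4*q) * (2 * (Real.exp r * Real.exp r' * (1 - q^2)^2 / 4))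
          = Real.exp R * ((1 + 4*q) * (1 - q^2)^2) / 2 := by rw [← hERE]; ring
      have h3 : Real.exp R * (1 + q^2) / 2 ≤ Real.exp R * ((1 + 4*q) * (1 - q^2)^2) / 2 := by
        have := mul_le_mul_of_nonneg_left hq5 (Real.exp_pos R).le
        linarith
      linarith
    rw [← hTA] at key
    exact le_of_mul_le_mul_right key (by linarith)
  have hT_pos : 0 < T := lt_of_lt_of_le (mul_pos hE_pos hq3) hT_low
  have hT_small : T ≤ 2 * q := by
    have h1 : E * (1 + 4*q) ≤ q * (1 + 4*q) :=
      mul_le_mul_of_nonneg_right hEq (by linarith)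
    have h2 : q * (1 + 4*q) = q + 4*q^2 := by ring
    linarith
  set u := Real.sqrt T with hudef
  have hu0 : 0 ≤ u := Real.sqrt_nonneg _
  have hu2 : u^2 = T := Real.sq_sqrt hT_pos.le
  have huhalf : u ≤ 1/2 := by
    have h1 : T ≤ (1/2:ℝ)^2 := by
      have : (1/2:ℝ)^2 = 1/4 := by norm_num
      linarith [hT_small, hq1]
    calc u ≤ Real.sqrt ((1/2:ℝ)^2) := Real.sqrt_le_sqrt h1
    _ = 1/2 := Real.sqrt_sq (by norm_num)
  -- arccos x = 2 arcsin u
  have hcos : Real.cos (2 * Real.arcsin u) = x := by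
    rw [Real.cos_two_mul, Real.cos_arcsin,
      Real.sq_sqrt (by linarith [hu2, hT_small, hq1] : (0:ℝ) ≤ 1 - u^2)]
    rw [hTdef] at hu2
    linarith
  have harcsin_nonneg : 0 ≤ Real.arcsin u := Real.arcsin_nonneg.2 hu0
  have harccos : Real.arccos x = 2 * Real.arcsin u := by
    rw [← hcos, Real.arccos_cos (by linarith)]
    have := Real.arcsin_le_pi_div_two u
    linarith
  -- sqrt estimates
  have hsqrtE : Real.sqrt E = Real.exp ((R - r - r')/2) := by
    have h1 : Real.exp ((R - r - r')/2)^2 = E := by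
      rw [sq, ← Real.exp_add, hEdef]; congr 1; ring
    rw [← h1, Real.sqrt_sq (Real.exp_pos _).le]
  have hexp_split : Real.exp (((R - r) + (R - r')) / 2)
      = Real.exp (R/2) * Real.exp ((R - r - r')/2) := by
    rw [← Real.exp_add]; congr 1; ring
  have heR2 : 0 < Real.exp (R/2) := Real.exp_pos _
  have heS2 : 0 < Real.exp ((R - r - r')/2) := Real.exp_pos _
  -- lower bound on u
  have hu_low : Real.exp ((R - r - r')/2) * (1 - 3*q) ≤ u := by
    have h1 : Real.sqrt (E * (1 - 3*q)) ≤ u := Real.sqrt_le_sqrt hT_low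
    have h2 : Real.sqrt (E * (1 - 3*q)) = Real.sqrt E * Real.sqrt (1 - 3*q) :=
      Real.sqrt_mul hE_pos.le _
    have h3 : (1 - 3*q) ≤ Real.sqrt (1 - 3*q) := sqrt_lb_aux _ (by linarith) (by linarith)
    have h4 : Real.exp ((R - r - r')/2) * (1 - 3*q) ≤ Real.sqrt E * Real.sqrt (1 - 3*q) := by
      rw [hsqrtE]
      exact mul_le_mul_of_nonneg_left h3 heS2.le
    linarith [h2 ▸ h1]
  -- upper bound on u
  have hu_up : u ≤ Real.exp ((R - r - r')/2) * (1 + 2*q) := by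
    have h1 : u ≤ Real.sqrt (E * (1 + 4*q)) := Real.sqrt_le_sqrt hT_up
    have h2 : Real.sqrt (E * (1 + 4*q)) = Real.sqrt E * Real.sqrt (1 + 4*q) :=
      Real.sqrt_mul hE_pos.le _
    have h3 : Real.sqrt (1 + 4*q) ≤ 1 + 2*q := sqrt_ub_aux q hq0.le
    have h4 : Real.sqrt E * Real.sqrt (1 + 4*q) ≤ Real.exp ((R - r - r')/2) * (1 + 2*q) := by
      rw [hsqrtE]
      exact mul_le_mul_of_nonneg_left h3 heS2.le
    linarith [h2 ▸ h1]
  have harc_low : u ≤ Real.arcsin u := le_arcsin_aux u hu0 huhalf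
  have harc_up : Real.arcsin u ≤ u * (1 + u^2) := arcsin_le_aux u hu0 huhalf
  rw [harccos, hexp_split]
  constructor
  · have h1 : (1 - ε) ≤ (1 - 3*q) := by rw [hqdef]; linarith
    have h2 : Real.exp ((R - r - r')/2) * (1 - ε) ≤ u := by
      have := mul_le_mul_of_nonneg_left h1 heS2.le
      linarith
    calc (1 - ε) * (Real.exp (R/2) * Real.exp ((R - r - r')/2))
        = Real.exp (R/2) * (Real.exp ((R - r - r')/2) * (1 - ε)) := by ring
      _ ≤ Real.exp (R/2) * u := mul_le_mul_of_nonneg_left h2 heR2.le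
      _ ≤ Real.exp (R/2) * Real.arcsin u := mul_le_mul_of_nonneg_left harc_low heR2.le
      _ = 1/2 * Real.exp (R/2) * (2 * Real.arcsin u) := by ring
  · have hu2q : u^2 ≤ 2*q := by rw [hu2]; exact hT_small
    have h2 : u * (1 + u^2) ≤ Real.exp ((R - r - r')/2) * (1 + ε) := by
      have h3 : u * (1 + u^2) ≤ u * (1 + 2*q) :=
        mul_le_mul_of_nonneg_left (by linarith) hu0
      have h4 : u * (1 + 2*q) ≤ (Real.exp ((R - r - r')/2) * (1 + 2*q)) * (1 + 2*q) :=
        mul_le_mul_of_nonneg_right hu_up (by linarith)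
      have h5 : (1 + 2*q) * (1 + 2*q) ≤ 1 + ε := by
        have h5a : (1 + 2*q) * (1 + 2*q) = 1 + 4*q + 4*q^2 := by ring
        have h5b : 5*q ≤ ε := by rw [hqdef]; linarith
        linarith [hq4]
      have h6 : (Real.exp ((R - r - r')/2) * (1 + 2*q)) * (1 + 2*q)
          = Real.exp ((R - r - r')/2) * ((1 + 2*q) * (1 + 2*q)) := by ring
      have h7 : Real.exp ((R - r - r')/2) * ((1 + 2*q) * (1 + 2*q))
          ≤ Real.exp ((R - r - r')/2) * (1 + ε) :=
        mul_le_mul_of_nonneg_left h5 heS2.le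
      linarith [h6 ▸ h4]
    calc 1/2 * Real.exp (R/2) * (2 * Real.arcsin u)
        = Real.exp (R/2) * Real.arcsin u := by ring
      _ ≤ Real.exp (R/2) * (u * (1 + u^2)) := mul_le_mul_of_nonneg_left harc_up heR2.le
      _ ≤ Real.exp (R/2) * (Real.exp ((R - r - r')/2) * (1 + ε)) :=
          mul_le_mul_of_nonneg_left h2 heR2.le
      _ = (1 + ε) * (Real.exp (R/2) * Real.exp ((R - r - r')/2)) := by ring
end

section
/- For every ε > 0 there exists R₀ > 1 such that for all R ≥ R₀ and all r, r' ∈ [R − 4·log R, R], the quantity Δ(r,r') := (1/2)·e^{R/2}·arccos((cosh r · cosh r' − cosh R)/(sinh r · sinh r')) satisfies |Δ(r,r')·e^{−(y+y')/2} − 1| ≤ ε, where y := R − r and y' := R − r'. -/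
open Real Filter


private lemma stmt3.quarter {t : ℝ} (h : t ^ 2 ≤ 1/16) (ht : 0 ≤ t) : t ≤ 1/4 := by
  nlinarith

private lemma stmt3.auxup (e t : ℝ) (he : 0 < e) (heh : e ≤ 1/2) (ht : 0 ≤ t)
    (ht2 : t ^ 2 ≤ e / 8) :
    t ^ 2 / 2 * (1 + e / 2) ≤ ((1 + e) * t) ^ 2 / 2 - ((1 + e) * t) ^ 4 * (5 / 96) := by
  have hv2 : ((1 + e) * t) ^ 2 ≤ (9/4) * t ^ 2 := by
    nlinarith [mul_nonneg (sub_nonneg.mpr heh) (sq_nonneg t),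
      mul_nonneg (mul_nonneg he.le (sub_nonneg.mpr heh)) (sq_nonneg t)]
  have hv2' : ((1 + e) * t) ^ 2 ≤ 9 * e / 32 := by linarith
  have hv4 : ((1 + e) * t) ^ 4 ≤ (9 * e / 32) * ((9/4) * t ^ 2) := by
    have hh : ((1 + e) * t) ^ 4 = ((1 + e) * t) ^ 2 * ((1 + e) * t) ^ 2 := by ring
    rw [hh]
    exact mul_le_mul hv2' hv2 (sq_nonneg _) (by positivity)
  nlinarith [hv4, mul_nonneg he.le (sq_nonneg t), mul_nonneg (mul_nonneg he.le he.le) (sq_nonneg t)]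

private lemma stmt3.auxlo (e t : ℝ) (he : 0 < e) (heh : e ≤ 1/2) (ht : 0 ≤ t)
    (ht2 : t ^ 2 ≤ e / 8) :
    ((1 - e) * t) ^ 2 / 2 + ((1 - e) * t) ^ 4 * (5 / 96) ≤ t ^ 2 / 2 * (1 - e / 2) := by
  have hw2 : ((1 - e) * t) ^ 2 ≤ t ^ 2 := by
    nlinarith [mul_nonneg (mul_nonneg he.le (by linarith : (0:ℝ) ≤ 2 - e)) (sq_nonneg t)]
  have hw2' : ((1 - e) * t) ^ 2 ≤ e / 8 := le_trans hw2 ht2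
  have hw4 : ((1 - e) * t) ^ 4 ≤ (e / 8) * t ^ 2 := by
    have hh : ((1 - e) * t) ^ 4 = ((1 - e) * t) ^ 2 * ((1 - e) * t) ^ 2 := by ring
    rw [hh]
    exact mul_le_mul hw2' hw2 (sq_nonneg _) (by positivity)
  have hee : e ^ 2 * t ^ 2 ≤ (e / 2) * t ^ 2 := by
    nlinarith [mul_nonneg (mul_nonneg he.le (sub_nonneg.mpr heh)) (sq_nonneg t)]
  nlinarith [hw4, hee, mul_nonneg he.le (sq_nonneg t)]

set_option maxHeartbeats 2000000 in
theorem stmt3 (ε : ℝ) (hε : 0 < ε) :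
    ∃ R₀ : ℝ, 1 < R₀ ∧ ∀ R : ℝ, R₀ ≤ R →
      ∀ r ∈ Set.Icc (R - 4 * Real.log R) R, ∀ r' ∈ Set.Icc (R - 4 * Real.log R) R,
        |(1 / 2) * Real.exp (R / 2) *
              Real.arccos
                ((Real.cosh r * Real.cosh r' - Real.cosh R) / (Real.sinh r * Real.sinh r')) *
              Real.exp (-((R - r) + (R - r')) / 2) - 1| ≤ ε := by
  set ε' : ℝ := min ε (1/2) with hε'def
  have hε'pos : 0 < ε' := lt_min hε (by norm_num)
  have hε'le : ε' ≤ ε := min_le_left _ _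
  have hε'half : ε' ≤ 1/2 := min_le_right _ _
  set δ₀ : ℝ := min (ε'/32) (1/64) with hδ₀def
  have hδ₀pos : 0 < δ₀ := lt_min (by linarith) (by norm_num)
  have h8 : Filter.Tendsto (fun x : ℝ => x ^ 8 * Real.exp (-x)) atTop (nhds 0) :=
    tendsto_pow_mul_exp_neg_atTop_nhds_zero 8
  obtain ⟨R₁, hR₁⟩ := Filter.eventually_atTop.mp
    ((h8.eventually (eventually_lt_nhds hδ₀pos)).and (eventually_ge_atTop (256:ℝ)))
  refine ⟨max R₁ 256, lt_of_lt_of_le (by norm_num) (le_max_right _ _), ?_⟩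
  intro R hR r hr r' hr'
  obtain ⟨hsmall, hRbig⟩ := hR₁ R (le_trans (le_max_left _ _) hR)
  -- basic facts about R
  have hR1 : (1:ℝ) ≤ R := by linarith
  have hRpos : (0:ℝ) < R := by linarith
  have hlog : Real.log R ≤ R / 8 := by
    rw [Real.log_le_iff_le_exp hRpos]
    have h1 : R/16 + 1 ≤ Real.exp (R/16) := Real.add_one_le_exp _
    have h2 : Real.exp (R/8) = Real.exp (R/16) * Real.exp (R/16) := by
      rw [← Real.exp_add]; ring_nf
    nlinarith [Real.exp_pos (R/16)]
  have hlognn : 0 ≤ Real.log R := Real.log_nonneg hR1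
  -- facts about r, r'
  have hrlo := hr.1
  have hrhi := hr.2
  have hr'lo := hr'.1
  have hr'hi := hr'.2
  have hrpos : 0 < r := by linarith
  have hr'pos : 0 < r' := by linarith
  set a : ℝ := r + r' with hadef
  set d : ℝ := r - r' with hddef
  have haR : R ≤ a := by linarith
  have hRa : R - a ≤ 8 * Real.log R - R := by linarith
  have hd1 : d ≤ 4 * Real.log R := by simp only [hddef]; linarith
  have hd2 : -d ≤ 4 * Real.log R := by simp only [hddef]; linarith
  -- exponential identities
  have hexp4 : Real.exp (4 * Real.log R) = R ^ 4 := by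
    rw [show (4:ℝ) * Real.log R = Real.log R + Real.log R + (Real.log R + Real.log R) by ring,
      Real.exp_add, Real.exp_add, Real.exp_log hRpos]; ring
  have hexp8 : Real.exp (8 * Real.log R) = R ^ 8 := by
    rw [show (8:ℝ) * Real.log R = 4 * Real.log R + 4 * Real.log R by ring,
      Real.exp_add, hexp4]; ring
  have hkey : R ^ 8 * Real.exp (-R) ≤ ε' / 32 :=
    le_trans hsmall.le (min_le_left _ _)
  have hkey2 : R ^ 8 * Real.exp (-R) ≤ 1 / 64 :=
    le_trans hsmall.le (min_le_right _ _)
  have hexpRnegmul : Real.exp (-R) * Real.exp R = 1 := by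
    rw [← Real.exp_add]; simp
  have hεR : 32 * R ^ 8 ≤ ε' * Real.exp R := by
    nlinarith [Real.exp_pos R, Real.exp_pos (-R)]
  have hR8pos : (0:ℝ) < R ^ 8 := by positivity
  have hR4ge1 : (1:ℝ) ≤ R ^ 4 := by
    have := pow_le_pow_left₀ (zero_le_one) hR1 4
    simpa using this
  have hR8ge : R ^ 4 ≤ R ^ 8 := pow_le_pow_right₀ hR1 (by norm_num)
  have hEra : Real.exp (R - a) ≤ R ^ 8 * Real.exp (-R) := by
    calc Real.exp (R - a) ≤ Real.exp (8 * Real.log R - R) := Real.exp_le_exp.mpr hRa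
      _ = R ^ 8 * Real.exp (-R) := by
          rw [show 8 * Real.log R - R = 8 * Real.log R + (-R) by ring, Real.exp_add, hexp8]
  have hEra1 : Real.exp (R - a) ≤ 1 := by
    rw [show (1:ℝ) = Real.exp 0 by simp]
    exact Real.exp_le_exp.mpr (by linarith)
  have hEraEA : Real.exp (R - a) * Real.exp a = Real.exp R := by
    rw [← Real.exp_add]; ring_nf
  have hERleEA : Real.exp R ≤ Real.exp a := Real.exp_le_exp.mpr haR
  -- cosh bounds
  have hcoshd : Real.cosh d ≤ R ^ 4 := by
    rw [Real.cosh_eq]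
    have h1 : Real.exp d ≤ R ^ 4 := by
      rw [← hexp4]; exact Real.exp_le_exp.mpr hd1
    have h2 : Real.exp (-d) ≤ R ^ 4 := by
      rw [← hexp4]; exact Real.exp_le_exp.mpr hd2
    linarith
  have hcoshd1 : 1 ≤ Real.cosh d := Real.one_le_cosh d
  have hcoshR_lo : Real.exp R / 2 ≤ Real.cosh R := by
    rw [Real.cosh_eq]; linarith [Real.exp_pos (-R)]
  have hcoshR_hi : Real.cosh R ≤ Real.exp R / 2 + 1/2 := by
    rw [Real.cosh_eq]
    have : Real.exp (-R) ≤ 1 := Real.exp_le_one_iff.mpr (by linarith)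
    linarith
  have hapos : 0 < a := by linarith
  have hcosha_lo : Real.exp a / 2 ≤ Real.cosh a := by
    rw [Real.cosh_eq]; linarith [Real.exp_pos (-a)]
  have hcosha_hi : Real.cosh a ≤ Real.exp a / 2 + 1/2 := by
    rw [Real.cosh_eq]
    have : Real.exp (-a) ≤ 1 := Real.exp_le_one_iff.mpr (by linarith)
    linarith
  -- product identities
  have hca : Real.cosh a = Real.cosh r * Real.cosh r' + Real.sinh r * Real.sinh r' :=
    Real.cosh_add r r'
  have hcd : Real.cosh d = Real.cosh r * Real.cosh r' - Real.sinh r * Real.sinh r' :=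
    Real.cosh_sub r r'
  have hP : 2 * (Real.sinh r * Real.sinh r') = Real.cosh a - Real.cosh d := by linarith
  have hPpos : 0 < Real.sinh r * Real.sinh r' :=
    mul_pos (Real.sinh_pos_iff.mpr hrpos) (Real.sinh_pos_iff.mpr hr'pos)
  set X : ℝ := (Real.cosh r * Real.cosh r' - Real.cosh R) / (Real.sinh r * Real.sinh r')
    with hXdef
  have hccP : Real.cosh r * Real.cosh r' = Real.sinh r * Real.sinh r' + Real.cosh d := by
    linarith
  have hXeq : X = 1 - (Real.cosh R - Real.cosh d) / (Real.sinh r * Real.sinh r') := by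
    have hnum : Real.cosh r * Real.cosh r' - Real.cosh R
        = (Real.sinh r * Real.sinh r') * 1 - (Real.cosh R - Real.cosh d) := by linarith
    rw [hXdef, hnum, mul_one, sub_div, div_self hPpos.ne']
  -- main sandwich on N := cosh R - cosh d
  set Era : ℝ := Real.exp (R - a) with hEradef
  have hErapos : 0 < Era := Real.exp_pos _
  have hNhi : Real.cosh R - Real.cosh d ≤ Era * (1 + ε'/2) * (Real.cosh a - Real.cosh d) := by
    have h1 : Era * (1 + ε'/2) * (Real.exp a / 2 - R ^ 4) ≤
        Era * (1 + ε'/2) * (Real.cosh a - Real.cosh d) := by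
      apply mul_le_mul_of_nonneg_left (by linarith) (by positivity)
    have h2 : Era * (1 + ε'/2) * (Real.exp a / 2 - R ^ 4)
        = (1 + ε'/2) * (Real.exp R / 2) - (1 + ε'/2) * Era * R ^ 4 := by
      linear_combination (1 + ε'/2)/2 * hEraEA
    have h4 : Era * R ^ 4 ≤ R ^ 4 := mul_le_of_le_one_left (by positivity) hEra1
    have h6 : ε' * (Era * R ^ 4) ≤ ε' * R ^ 4 := mul_le_mul_of_nonneg_left h4 hε'pos.le
    have h8 : ε' * R ^ 4 ≤ (1/2) * R ^ 4 := mul_le_mul_of_nonneg_right hε'half (by positivity)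
    have h7 : (1 + ε'/2) * Era * R ^ 4 ≤ (3/2) * R ^ 4 := by linarith [h4, h6, h8, hR4ge1]
    linarith [h1, h2, h7, hεR, hR8ge, hcoshR_hi, hcoshd1, hR4ge1]
  have hNlo : Era * (1 - ε'/2) * (Real.cosh a - Real.cosh d) ≤ Real.cosh R - Real.cosh d := by
    have h1 : Era * (1 - ε'/2) * (Real.cosh a - Real.cosh d) ≤
        Era * (1 - ε'/2) * (Real.exp a / 2) := by
      apply mul_le_mul_of_nonneg_left (by linarith) (mul_nonneg hErapos.le (by linarith))
    have h2 : Era * (1 - ε'/2) * (Real.exp a / 2) = (1 - ε'/2) * (Real.exp R / 2) := by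
      linear_combination (1 - ε'/2)/2 * hEraEA
    linarith [h1, h2, hεR, hR8ge, hcoshR_lo, hcoshd]
  -- convert to bounds on X
  rw [← hP] at hNhi hNlo
  have hQhi : 1 - X ≤ 2 * Era * (1 + ε'/2) := by
    rw [hXeq]
    rw [sub_sub_cancel, div_le_iff₀ hPpos]
    linarith [hNhi]
  have hQlo : 2 * Era * (1 - ε'/2) ≤ 1 - X := by
    rw [hXeq]
    rw [sub_sub_cancel, le_div_iff₀ hPpos]
    linarith [hNlo]
  -- the quantity t
  set t : ℝ := 2 * Real.exp ((R - a)/2) with htdef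
  have htpos : 0 < t := by positivity
  have ht2 : t ^ 2 = 4 * Era := by
    have h := Real.exp_add ((R - a)/2) ((R - a)/2)
    rw [show (R - a)/2 + (R - a)/2 = R - a by ring] at h
    rw [htdef, hEradef, h]; ring
  have ht2e : t ^ 2 ≤ ε' / 8 := by
    rw [ht2]
    have : Era ≤ ε' / 32 := le_trans hEra hkey
    linarith
  have htle : t ≤ 1/4 := by
    have h1 : t ^ 2 ≤ 1/16 := by
      rw [ht2]
      have : Era ≤ 1/64 := le_trans hEra hkey2
      linarith
    exact stmt3.quarter h1 htpos.le
  set u : ℝ := (1 + ε') * t with hudef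
  set u' : ℝ := (1 - ε') * t with hu'def
  have hu'nn : 0 ≤ u' := by
    apply mul_nonneg (by linarith) htpos.le
  have hunn : 0 ≤ u := by positivity
  have hu1 : u ≤ 1 := by
    rw [hudef]
    have h1 : (1 + ε') * t ≤ (3/2) * t := mul_le_mul_of_nonneg_right (by linarith) htpos.le
    linarith
  have hu'1 : u' ≤ 1 := by
    rw [hu'def]
    have h1 : (1 - ε') * t ≤ 1 * t := mul_le_mul_of_nonneg_right (by linarith) htpos.le
    linarith
  have huabs : |u| ≤ 1 := by rw [abs_of_nonneg hunn]; exact hu1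
  have hu'abs : |u'| ≤ 1 := by rw [abs_of_nonneg hu'nn]; exact hu'1
  have hcosu := Real.cos_bound huabs
  have hcosu' := Real.cos_bound hu'abs
  rw [abs_of_nonneg hunn] at hcosu
  rw [abs_of_nonneg hu'nn] at hcosu'
  rw [abs_le] at hcosu hcosu'
  -- X between cos u and cos u'
  have hXge : Real.cos u ≤ X := by
    have h1 : Real.cos u ≤ 1 - u^2/2 + u^4 * (5/96) := by linarith [hcosu.2]
    have h2 : 1 - u^2/2 + u^4*(5/96) ≤ 1 - 2 * Era * (1 + ε'/2) := by
      have hEt : 2 * Era = t^2/2 := by rw [ht2]; ring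
      rw [hEt, hudef]
      linarith [stmt3.auxup ε' t hε'pos hε'half htpos.le ht2e]
    linarith
  have hXle : X ≤ Real.cos u' := by
    have h1 : 1 - u'^2/2 - u'^4 * (5/96) ≤ Real.cos u' := by linarith [hcosu'.1]
    have h2 : 1 - 2 * Era * (1 - ε'/2) ≤ 1 - u'^2/2 - u'^4*(5/96) := by
      have hEt : 2 * Era = t^2/2 := by rw [ht2]; ring
      rw [hEt, hu'def]
      linarith [stmt3.auxlo ε' t hε'pos hε'half htpos.le ht2e]
    linarith
  -- arccos bounds
  have anti : ∀ x y : ℝ, x ≤ y → Real.arccos y ≤ Real.arccos x := by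
    intro x y h
    simp only [Real.arccos_eq_pi_div_two_sub_arcsin]
    have := Real.monotone_arcsin h
    linarith
  have hpi : (3:ℝ) < Real.pi := Real.pi_gt_three
  have huπ : u ≤ Real.pi := by linarith
  have hu'π : u' ≤ Real.pi := by linarith
  have hθhi : Real.arccos X ≤ u := by
    have h := anti _ _ hXge
    rwa [Real.arccos_cos hunn huπ] at h
  have hθlo : u' ≤ Real.arccos X := by
    have h := anti _ _ hXle
    rwa [Real.arccos_cos hu'nn hu'π] at h
  -- final computation
  set c : ℝ := (1/2) * Real.exp (R/2) * Real.exp (-((R - r) + (R - r'))/2) with hcdef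
  have hcpos : 0 < c := by positivity
  have hct : c * t = 1 := by
    rw [hcdef, htdef]
    rw [show (1/2) * Real.exp (R/2) * Real.exp (-((R - r) + (R - r'))/2) *
        (2 * Real.exp ((R - a)/2)) =
        Real.exp (R/2) * Real.exp (-((R - r) + (R - r'))/2) * Real.exp ((R - a)/2) by ring,
      ← Real.exp_add, ← Real.exp_add,
      show R/2 + -((R - r) + (R - r'))/2 + (R - a)/2 = 0 by rw [hadef]; ring,
      Real.exp_zero]
  have hup : c * Real.arccos X ≤ 1 + ε' := by
    calc c * Real.arccos X ≤ c * u := mul_le_mul_of_nonneg_left hθhi hcpos.le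
      _ = (1 + ε') * (c * t) := by rw [hudef]; ring
      _ = 1 + ε' := by rw [hct, mul_one]
  have hlo : 1 - ε' ≤ c * Real.arccos X := by
    calc (1:ℝ) - ε' = (1 - ε') * (c * t) := by rw [hct, mul_one]
      _ = c * u' := by rw [hu'def]; ring
      _ ≤ c * Real.arccos X := mul_le_mul_of_nonneg_left hθlo hcpos.le
  have hrw : (1/2) * Real.exp (R/2) * Real.arccos X * Real.exp (-((R - r) + (R - r'))/2)
      = c * Real.arccos X := by rw [hcdef]; ring
  rw [hrw, abs_le]
  constructor <;> linarith
end

section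
/- There exist constants K > 0 and C₀ > 0 such that for all C ≥ C₀, every R > C and all r, r' ∈ [0, R] with r + r' > R + C, the quantity Δ(r,r') := (1/2)·e^{R/2}·arccos((cosh r · cosh r' − cosh R)/(sinh r · sinh r')) satisfies |Δ(r,r') − e^{(y+y')/2}| ≤ K·e^{−C}·e^{(y+y')/2}, where y := R − r and y' := R − r'. -/
set_option maxHeartbeats 400000

theorem stmt4 : ∃ K C₀ : ℝ, 0 < K ∧ 0 < C₀ ∧ ∀ C : ℝ, C₀ ≤ C → ∀ R : ℝ, C < R →
    ∀ r ∈ Set.Icc (0 : ℝ) R, ∀ r' ∈ Set.Icc (0 : ℝ) R, R + C < r + r' →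
      |(1 / 2) * Real.exp (R / 2) *
            Real.arccos
              ((Real.cosh r * Real.cosh r' - Real.cosh R) / (Real.sinh r * Real.sinh r')) -
          Real.exp (((R - r) + (R - r')) / 2)| ≤
        K * Real.exp (-C) * Real.exp (((R - r) + (R - r')) / 2) := by
  refine ⟨10, 10, by norm_num, by norm_num, ?_⟩
  intro C hC R hR r hr r' hr' hsum
  obtain ⟨hr0, hrR⟩ := hr
  obtain ⟨hr'0, hr'R⟩ := hr'
  set ε := Real.exp (-C) with hεdef
  clear_value ε
  have hεpos : 0 < ε := hεdef ▸ Real.exp_pos _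
  -- ε ≤ 1/20000
  have hexp10 : (20000 : ℝ) ≤ Real.exp 10 := by
    have h1 : (2.7 : ℝ) ≤ Real.exp 1 := le_of_lt (by
      have := Real.exp_one_gt_d9; linarith)
    have h2 : ((2.7 : ℝ)) ^ (10 : ℕ) ≤ (Real.exp 1) ^ (10 : ℕ) :=
      pow_le_pow_left₀ (by norm_num) h1 10
    have h3 : (Real.exp 1) ^ (10 : ℕ) = Real.exp 10 := by
      rw [← Real.exp_nat_mul]; norm_num
    have h4 : (20000 : ℝ) ≤ (2.7 : ℝ) ^ (10 : ℕ) := by norm_num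
    rw [h3] at h2
    linarith
  have hεsmall : ε ≤ 1 / 20000 := by
    have h0 : ε ≤ Real.exp (-10) := hεdef ▸ Real.exp_le_exp.2 (by linarith)
    have h4 : Real.exp (-10) = 1 / Real.exp 10 := by
      rw [Real.exp_neg]; exact inv_eq_one_div _
    have h5 : Real.exp (-10) ≤ 1 / 20000 := by
      rw [h4]
      exact one_div_le_one_div_of_le (by norm_num) hexp10
    linarith
  have hCpos : (0 : ℝ) < C := by linarith
  have hrC : C < r := by linarith
  have hr'C : C < r' := by linarith
  have hrpos : 0 < r := by linarith
  have hr'pos : 0 < r' := by linarith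
  set t := r + r' - R with htdef
  clear_value t
  have htC : C < t := by rw [htdef]; linarith
  have het : Real.exp (-t) ≤ ε := by
    rw [hεdef]; exact Real.exp_le_exp.2 (by linarith)
  have het_pos : (0:ℝ) < Real.exp (-t) := Real.exp_pos _
  have hsinh_r : 0 < Real.sinh r := Real.sinh_pos_iff.2 hrpos
  have hsinh_r' : 0 < Real.sinh r' := Real.sinh_pos_iff.2 hr'pos
  set S := Real.sinh r * Real.sinh r' with hSdef
  have hS : 0 < S := mul_pos hsinh_r hsinh_r'
  set x := (Real.cosh r * Real.cosh r' - Real.cosh R) / S with hxdef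
  -- x ≤ 1
  have hx_le1 : x ≤ 1 := by
    rw [hxdef, div_le_one hS, hSdef]
    have h := Real.cosh_sub r r'
    have hmono : Real.cosh (r - r') ≤ Real.cosh R := by
      rw [Real.cosh_le_cosh, abs_of_nonneg (by linarith : (0:ℝ) ≤ R), abs_le]
      constructor <;> linarith
    linarith
  -- -1 ≤ x
  have hx_gem1 : -1 ≤ x := by
    rw [hxdef, le_div_iff₀ hS, hSdef]
    have h := Real.cosh_add r r'
    have hmono : Real.cosh R ≤ Real.cosh (r + r') := by
      rw [Real.cosh_le_cosh, abs_of_nonneg (by linarith : (0:ℝ) ≤ R),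
        abs_of_nonneg (by linarith : (0:ℝ) ≤ r + r')]
      linarith
    linarith only [h, hmono]
  -- formula for 1 - x
  have hone_sub : 1 - x = (Real.cosh R - Real.cosh (r - r')) / S := by
    rw [hxdef, Real.cosh_sub, hSdef]
    field_simp
    ring
  clear_value S x
  -- exponential facts
  have hcoshR : Real.cosh R = (Real.exp R + Real.exp (-R)) / 2 := Real.cosh_eq R
  have hcoshd : Real.cosh (r - r') = (Real.exp (r - r') + Real.exp (r' - r)) / 2 := by
    rw [Real.cosh_eq]; norm_num
  have heRC : Real.exp (R - C) = Real.exp R * ε := by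
    rw [hεdef, ← Real.exp_add]; ring_nf
  have h1 : Real.exp (r - r') ≤ Real.exp R * ε := by
    rw [← heRC]; exact Real.exp_le_exp.2 (by linarith)
  have h2 : Real.exp (r' - r) ≤ Real.exp R * ε := by
    rw [← heRC]; exact Real.exp_le_exp.2 (by linarith)
  have heR_pos : (0:ℝ) < Real.exp R := Real.exp_pos R
  have hemR : Real.exp (-R) ≤ ε := by
    rw [hεdef]; exact Real.exp_le_exp.2 (by linarith)
  have heR1 : (1:ℝ) ≤ Real.exp R := Real.one_le_exp (by linarith)
  -- numerator bounds
  have hN_lo : Real.exp R / 2 * (1 - 2 * ε) ≤ Real.cosh R - Real.cosh (r - r') := by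
    rw [hcoshR, hcoshd]
    linarith only [h1, h2, Real.exp_pos (-R)]
  have hN_hi : Real.cosh R - Real.cosh (r - r') ≤ Real.exp R / 2 * (1 + ε) := by
    rw [hcoshR]
    nlinarith only [Real.cosh_pos (x := r - r'), hemR, hεpos,
      mul_nonneg (by linarith only [heR1] : (0:ℝ) ≤ Real.exp R - 1) hεpos.le]
  -- S bounds
  have hemr : Real.exp (-r) ≤ Real.exp r * ε := by
    have ha : Real.exp (-r) = Real.exp r * Real.exp (-2 * r) := by
      rw [← Real.exp_add]; ring_nf
    have hb : Real.exp (-2 * r) ≤ ε := by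
      rw [hεdef]; exact Real.exp_le_exp.2 (by linarith)
    rw [ha]
    exact mul_le_mul_of_nonneg_left hb (Real.exp_pos r).le
  have hemr' : Real.exp (-r') ≤ Real.exp r' * ε := by
    have ha : Real.exp (-r') = Real.exp r' * Real.exp (-2 * r') := by
      rw [← Real.exp_add]; ring_nf
    have hb : Real.exp (-2 * r') ≤ ε := by
      rw [hεdef]; exact Real.exp_le_exp.2 (by linarith)
    rw [ha]
    exact mul_le_mul_of_nonneg_left hb (Real.exp_pos r').le
  have herr' : Real.exp r * Real.exp r' = Real.exp (r + r') := (Real.exp_add r r').symm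
  have herr'_pos : (0:ℝ) < Real.exp (r + r') := Real.exp_pos _
  have hS_hi : S ≤ Real.exp (r + r') / 4 := by
    rw [hSdef, Real.sinh_eq, Real.sinh_eq, ← herr']
    have k1 : Real.exp (-r) * Real.exp (-r') ≤ Real.exp r * Real.exp (-r') :=
      mul_le_mul_of_nonneg_right (Real.exp_le_exp.2 (by linarith)) (Real.exp_pos _).le
    have k2 : (0:ℝ) < Real.exp (-r) * Real.exp r' := by positivity
    nlinarith only [k1, k2]
  have hε1 : (0:ℝ) ≤ 1 - ε := by linarith
  have hS_lo : Real.exp (r + r') / 4 * (1 - ε) ^ 2 ≤ S := by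
    rw [hSdef, Real.sinh_eq, Real.sinh_eq, ← herr']
    have e1 : Real.exp r * (1 - ε) ≤ Real.exp r - Real.exp (-r) := by
      linarith only [hemr]
    have e2 : Real.exp r' * (1 - ε) ≤ Real.exp r' - Real.exp (-r') := by
      linarith only [hemr']
    have key := mul_le_mul e1 e2 (by positivity)
      (by linarith only [e1, mul_nonneg (Real.exp_pos r).le hε1] :
        (0:ℝ) ≤ Real.exp r - Real.exp (-r))
    nlinarith only [key]
  -- exp(R) = exp(-t) * exp(r+r')
  have heRt : Real.exp R = Real.exp (-t) * Real.exp (r + r') := by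
    rw [← Real.exp_add, htdef]; congr 1; ring
  -- bounds on 1 - x
  have hlo : 2 * Real.exp (-t) * (1 - 2 * ε) ≤ 1 - x := by
    rw [hone_sub, le_div_iff₀ hS]
    have hstep : 2 * Real.exp (-t) * (1 - 2 * ε) * S ≤
        2 * Real.exp (-t) * (1 - 2 * ε) * (Real.exp (r + r') / 4) := by
      apply mul_le_mul_of_nonneg_left hS_hi
      have : (0:ℝ) ≤ 1 - 2 * ε := by linarith
      positivity
    have heq : 2 * Real.exp (-t) * (1 - 2 * ε) * (Real.exp (r + r') / 4) =
        Real.exp R / 2 * (1 - 2 * ε) := by rw [heRt]; ring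
    linarith
  have hhi : 1 - x ≤ 2 * Real.exp (-t) * (1 + 4 * ε) := by
    rw [hone_sub, div_le_iff₀ hS]
    have hstep : 2 * Real.exp (-t) * (1 + 4 * ε) * (Real.exp (r + r') / 4 * (1 - ε) ^ 2) ≤
        2 * Real.exp (-t) * (1 + 4 * ε) * S := by
      apply mul_le_mul_of_nonneg_left hS_lo
      positivity
    have heq : 2 * Real.exp (-t) * (1 + 4 * ε) * (Real.exp (r + r') / 4 * (1 - ε) ^ 2) =
        Real.exp R / 2 * ((1 + 4 * ε) * (1 - ε) ^ 2) := by rw [heRt]; ring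
    have hpoly : Real.exp R / 2 * (1 + ε) ≤ Real.exp R / 2 * ((1 + 4 * ε) * (1 - ε) ^ 2) := by
      apply mul_le_mul_of_nonneg_left _ (by positivity)
      have c1 : ε ^ 2 ≤ ε / 20000 := by nlinarith only [hεpos, hεsmall]
      nlinarith only [c1, mul_nonneg (mul_nonneg hεpos.le hεpos.le) hεpos.le, hεpos, hεsmall]
    linarith
  have hx_lt1 : x < 1 := by
    have hp : (0:ℝ) < 2 * Real.exp (-t) * (1 - 2 * ε) := by
      have : (0:ℝ) < 1 - 2 * ε := by linarith
      positivity
    linarith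
  have h1x_pos : 0 < 1 - x := by linarith
  -- E and L
  have hEE : Real.exp (-t / 2) * Real.exp (-t / 2) = Real.exp (-t) := by
    rw [← Real.exp_add]; congr 1; ring
  set E := 2 * Real.exp (-t / 2) with hEdef
  have hEpos : 0 < E := by rw [hEdef]; positivity
  have hE2 : E ^ 2 = 4 * Real.exp (-t) := by
    rw [hEdef, ← hEE]; ring
  clear_value E
  set L := Real.sqrt (2 * (1 - x)) with hLdef
  have hLpos : 0 < L := hLdef ▸ Real.sqrt_pos.2 (by linarith)
  have hL2 : L ^ 2 = 2 * (1 - x) := hLdef ▸ Real.sq_sqrt (by linarith)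
  have hL_hi : L ≤ E * (1 + 4 * ε) := by
    have hb : 2 * (1 - x) ≤ (E * (1 + 4 * ε)) ^ 2 := by
      have hexp : (E * (1 + 4 * ε)) ^ 2 = 4 * Real.exp (-t) * (1 + 4 * ε) ^ 2 := by
        rw [mul_pow, hE2]
      rw [hexp]
      nlinarith only [hhi, het_pos, hεpos, mul_pos (mul_pos het_pos hεpos) hεpos,
        mul_pos het_pos hεpos]
    calc L = Real.sqrt (2 * (1 - x)) := hLdef
      _ ≤ Real.sqrt ((E * (1 + 4 * ε)) ^ 2) := Real.sqrt_le_sqrt hb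
      _ = E * (1 + 4 * ε) := Real.sqrt_sq (by positivity)
  have hL_lo : E * (1 - 2 * ε) ≤ L := by
    have hb : (E * (1 - 2 * ε)) ^ 2 ≤ 2 * (1 - x) := by
      have hexp : (E * (1 - 2 * ε)) ^ 2 = 4 * Real.exp (-t) * (1 - 2 * ε) ^ 2 := by
        rw [mul_pow, hE2]
      rw [hexp]
      nlinarith only [hlo, het_pos, hεpos, hεsmall,
        mul_nonneg (mul_pos het_pos hεpos).le (by linarith : (0:ℝ) ≤ 1 - 2 * ε)]
    calc E * (1 - 2 * ε) = Real.sqrt ((E * (1 - 2 * ε)) ^ 2) :=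
        (Real.sqrt_sq (mul_nonneg hEpos.le (by linarith))).symm
      _ ≤ Real.sqrt (2 * (1 - x)) := Real.sqrt_le_sqrt hb
      _ = L := hLdef.symm
  clear_value L
  have hL2small : L ^ 2 ≤ 5 * ε := by
    rw [hL2]
    nlinarith only [hhi, het, hεpos, hεsmall, mul_nonneg (sub_nonneg.2 het) hεpos.le]
  have hLsmall : L ≤ 1 / 10 := by
    nlinarith only [hL2small, hεsmall, sq_nonneg (L - 1 / 10), hLpos]
  have hL1 : L ^ 2 ≤ 1 / 100 := by nlinarith only [hL2small, hεsmall]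
  -- lower bound for arccos
  have hxcosL : x ≤ Real.cos L := by
    have h := Real.one_sub_sq_div_two_le_cos (x := L)
    linarith only [h, hL2]
  have hpi : (3.14 : ℝ) < Real.pi := by
    have := Real.pi_gt_d6; linarith
  have harc_lo : L ≤ Real.arccos x := by
    by_contra h
    push_neg at h
    have hcos := Real.cos_lt_cos_of_nonneg_of_le_pi (Real.arccos_nonneg x)
      (by linarith : L ≤ Real.pi) h
    rw [Real.cos_arccos hx_gem1 hx_le1] at hcos
    linarith
  -- upper bound for arccos
  set s := L * (1 + L ^ 2) / 2 with hsdef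
  have hs_pos : 0 < s := by rw [hsdef]; positivity
  have hs_le1 : s ≤ 1 := by
    rw [hsdef]
    nlinarith only [hLpos, hLsmall, hL1,
      mul_le_mul hLsmall hL1 (sq_nonneg L) (by norm_num)]
  clear_value s
  have hsin : s - s ^ 3 / 4 < Real.sin s := by
    have := Real.sin_gt_sub_cube hs_pos; nlinarith [pow_pos hs_pos 3]
  have hsin_ge : L / 2 ≤ Real.sin s := by
    have hL4 : L ^ 4 ≤ 1 / 10000 := by
      nlinarith only [hL1, sq_nonneg L, sq_nonneg (L ^ 2)]
    have hL6 : L ^ 6 ≤ 1 / 1000000 := by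
      nlinarith only [hL1, hL4, sq_nonneg L, sq_nonneg (L ^ 2), sq_nonneg (L ^ 3)]
    have h16 : (0:ℝ) ≤ 16 - (1 + L ^ 2) ^ 3 := by
      nlinarith only [hL1, hL4, hL6]
    have hcube : (0:ℝ) ≤ L ^ 3 * (16 - (1 + L ^ 2) ^ 3) :=
      mul_nonneg (by positivity) h16
    have key : L / 2 ≤ s - s ^ 3 / 4 := by
      rw [hsdef]; nlinarith only [hcube]
    linarith
  have hcosU : Real.cos (2 * s) ≤ x := by
    have hhalf := Real.sin_sq_eq_half_sub (x := s)
    have hsq : (L / 2) ^ 2 ≤ Real.sin s ^ 2 := by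
      nlinarith only [hsin_ge, hLpos]
    linarith only [hhalf, hsq, hL2]
  have harc_hi : Real.arccos x ≤ 2 * s := by
    by_contra h
    push_neg at h
    have hcos := Real.cos_lt_cos_of_nonneg_of_le_pi (by positivity : (0:ℝ) ≤ 2 * s)
      (Real.arccos_le_pi x) h
    rw [Real.cos_arccos hx_gem1 hx_le1] at hcos
    linarith
  -- combine: |arccos x - E| ≤ 10 ε E
  have harc_bound : |Real.arccos x - E| ≤ 10 * ε * E := by
    rw [abs_le]
    have h2s : 2 * s = L + L * L ^ 2 := by rw [hsdef]; ring
    have hup : Real.arccos x ≤ L + L * L ^ 2 := by rw [← h2s]; exact harc_hi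
    have hLL2 : L * L ^ 2 ≤ E * (1 + 4 * ε) * (5 * ε) :=
      mul_le_mul hL_hi hL2small (by positivity) (by positivity)
    constructor
    · nlinarith only [le_trans hL_lo harc_lo, hEpos, hεpos, mul_pos hEpos hεpos]
    · nlinarith only [hup, hL_hi, hLL2, hEpos, hεpos, hεsmall, mul_pos hEpos hεpos,
        mul_pos (mul_pos hEpos hεpos) hεpos]
  -- final
  have hEA : 1 / 2 * Real.exp (R / 2) * E = Real.exp ((R - r + (R - r')) / 2) := by
    rw [hEdef]
    have hring : 1 / 2 * Real.exp (R / 2) * (2 * Real.exp (-t / 2)) =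
        Real.exp (R / 2) * Real.exp (-t / 2) := by ring
    rw [hring, ← Real.exp_add]
    congr 1
    rw [htdef]; ring
  have hfact : 1 / 2 * Real.exp (R / 2) * Real.arccos x -
      Real.exp ((R - r + (R - r')) / 2) =
      1 / 2 * Real.exp (R / 2) * (Real.arccos x - E) := by
    rw [← hEA]; ring
  rw [hfact, abs_mul, abs_of_pos (by positivity : (0:ℝ) < 1 / 2 * Real.exp (R / 2))]
  calc 1 / 2 * Real.exp (R / 2) * |Real.arccos x - E|
      ≤ 1 / 2 * Real.exp (R / 2) * (10 * ε * E) :=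
        mul_le_mul_of_nonneg_left harc_bound (by positivity)
    _ = 10 * ε * (1 / 2 * Real.exp (R / 2) * E) := by ring
    _ = 10 * ε * Real.exp ((R - r + (R - r')) / 2) := by rw [hEA]
end

section
/- Let α > 0 and R > 0 satisfy e^{αR} > 2, and define ρ̄(y) := α·sinh(α(R − y))/(cosh(αR) − 1) for y ∈ [0, R]. Then for every y ∈ [0, R]: |ρ̄(y) − α·e^{−αy}| < 2α/(e^{αR} − 2). -/
theorem stmt5 (α R : ℝ) (hα : 0 < α) (hR : 0 < R) (h : 2 < Real.exp (α * R)) :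
    ∀ y ∈ Set.Icc (0 : ℝ) R,
      |α * Real.sinh (α * (R - y)) / (Real.cosh (α * R) - 1) - α * Real.exp (-α * y)| <
        2 * α / (Real.exp (α * R) - 2) := by
  rintro y ⟨hy0, hyR⟩
  set x := Real.exp (α * (R - y)) with hxdef
  set X := Real.exp (α * R) with hXdef
  have hx0 : 0 < x := Real.exp_pos _
  have hX0 : 0 < X := Real.exp_pos _
  have hx1 : 1 ≤ x := Real.one_le_exp (by nlinarith)
  have hxX : x ≤ X := Real.exp_le_exp.mpr (by nlinarith)
  have hX2 : 2 < X := h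
  have hX1 : (0:ℝ) < X - 1 := by linarith
  have hD : 0 < x * X * (X - 1) ^ 2 := mul_pos (mul_pos hx0 hX0) (pow_pos hX1 2)
  have hexpneg : Real.exp (-α * y) = x / X := by
    rw [hxdef, hXdef, ← Real.exp_sub]; ring_nf
  have key : α * Real.sinh (α * (R - y)) / (Real.cosh (α * R) - 1) -
      α * Real.exp (-α * y)
      = α * (2 * x ^ 2 * X - x ^ 2 - X ^ 2) / (x * X * (X - 1) ^ 2) := by
    rw [Real.sinh_eq, Real.cosh_eq, Real.exp_neg, Real.exp_neg, hexpneg,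
      ← hxdef, ← hXdef]
    have h1 : (X + X⁻¹) / 2 - 1 = (X - 1) ^ 2 / (2 * X) := by
      field_simp; ring
    rw [h1]
    field_simp
    ring
  rw [key, abs_div, abs_of_pos hD, abs_mul, abs_of_pos hα,
    div_lt_div_iff₀ hD (by linarith : (0:ℝ) < X - 2)]
  have h2 : 0 ≤ 2 * x * X - x - X := by
    nlinarith [mul_nonneg (sub_nonneg.mpr hx1) (by linarith : (0:ℝ) ≤ 2 * X - 1)]
  have hN : |2 * x ^ 2 * X - x ^ 2 - X ^ 2| ≤ 2 * x * X * (X - 1) := by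
    rw [abs_le]
    constructor
    · nlinarith [mul_nonneg (by positivity : (0:ℝ) ≤ x + X) h2]
    · nlinarith [sq_nonneg (x - X),
        mul_nonneg (mul_nonneg hx0.le hX0.le) (sub_nonneg.mpr hxX)]
  have step1 : α * |2 * x ^ 2 * X - x ^ 2 - X ^ 2| * (X - 2) ≤
      α * (2 * x * X * (X - 1)) * (X - 2) := by
    have := mul_le_mul_of_nonneg_left hN
      (le_of_lt (mul_pos hα (by linarith : (0:ℝ) < X - 2)))
    nlinarith [this]
  nlinarith [step1, mul_pos (mul_pos (mul_pos hα hx0) hX0) hX1]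
end

section
/- Let α > 1/2, β > 0, and set γ := 4β/(2α − 1). Let μ_α be the measure on ℝ × [0,∞) with density β·e^{−αy} with respect to Lebesgue measure d x d y. Let c > 0, h > 0, let 0 ≤ y₂ < y₁, set Y₁ := e^{y₁/2}, Y₂ := e^{y₂/2}, and let p₁ = (x₁, y₁), p₂ = (x₂, y₂) be points with t := x₂ − x₁ satisfying c(Y₁ + Y₂) ≤ t ≤ c·e^{h/2}·(Y₁ − Y₂). Define B_h^c(p) := {(x,y) : 0 ≤ y < h, |x − x_p| < c·e^{(y + y_p)/2}} for p = (x_p, y_p). Then μ_α(B_h^c(p₁) ∩ B_h^c(p₂)) = c^{2α}·(γ/(4α))·t^{1−2α}·((Y₁ + Y₂)^{2α} − (Y₁ − Y₂)^{2α}) − c·γ·Y₂·e^{(1/2 − α)h}. -/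
open MeasureTheory

/-- The measure on `ℝ × [0,∞)` with density `β·e^{-αy}` with respect to Lebesgue measure. -/
noncomputable def muAlpha (α β : ℝ) : Measure (ℝ × ℝ) :=
  ((volume : Measure (ℝ × ℝ)).restrict {p : ℝ × ℝ | 0 ≤ p.2}).withDensity
    (fun p => ENNReal.ofReal (β * Real.exp (-α * p.2)))

/-- The truncated approximate ball `B_h^c(p)`. -/
def ballTrunc (c h : ℝ) (p : ℝ × ℝ) : Set (ℝ × ℝ) :=
  {q | 0 ≤ q.2 ∧ q.2 < h ∧ |q.1 - p.1| < c * Real.exp ((q.2 + p.2) / 2)}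

private theorem int_exp (k a b : ℝ) (hk : k ≠ 0) :
    ∫ y in a..b, Real.exp (k*y) = (Real.exp (k*b) - Real.exp (k*a))/k := by
  have h1 : ∀ y : ℝ, HasDerivAt (fun y => Real.exp (k*y)/k) (Real.exp (k*y)) y := by
    intro y
    have h0 := ((Real.hasDerivAt_exp (k*y)).comp y ((hasDerivAt_id y).const_mul k)).div_const k
    have h2 : Real.exp (k * y) * (k * 1) / k = Real.exp (k*y) := by field_simp
    simp only [id_eq, Function.comp_def] at h0
    rw [h2] at h0
    exact h0
  rw [intervalIntegral.integral_eq_sub_of_hasDerivAt (fun y _ => h1 y)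
    ((Real.continuous_exp.comp (continuous_const.mul continuous_id)).intervalIntegrable a b)]
  ring

private theorem sect_lemma (S : Set (ℝ×ℝ)) (hS : MeasurableSet S) (g : ℝ → ENNReal)
    (hg : Measurable g) :
    ∫⁻ p in S, g p.2 ∂(volume : Measure (ℝ×ℝ)) = ∫⁻ y, g y * volume {x | (x,y) ∈ S} := by
  rw [← lintegral_indicator hS, Measure.volume_eq_prod, lintegral_prod_symm]
  · congr 1; funext y
    have h3 : ∀ x : ℝ, S.indicator (fun p : ℝ×ℝ => g p.2) (x,y)
        = {x | (x,y) ∈ S}.indicator (fun _ => g y) x := by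
      intro x; by_cases hx : (x,y) ∈ S <;> simp [Set.indicator_apply, hx]
    have hm : MeasurableSet {x : ℝ | (x,y) ∈ S} :=
      hS.preimage (measurable_id.prodMk measurable_const)
    simp only [h3]
    rw [lintegral_indicator_const hm, mul_comm]
  · exact ((hg.comp measurable_snd).indicator hS).aemeasurable

private theorem ofReal_max (a : ℝ) : ENNReal.ofReal (max a 0) = ENNReal.ofReal a := by
  rcases le_total a 0 with h | h
  · simp [max_eq_right h, ENNReal.ofReal_eq_zero.2 h]
  · simp [max_eq_left h]

set_option maxHeartbeats 2000000

theorem stmt8 (α β c h x₁ x₂ y₁ y₂ : ℝ) (hα : 1 / 2 < α) (hβ : 0 < β)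
    (hc : 0 < c) (hh : 0 < h) (hy₂ : 0 ≤ y₂) (hy : y₂ < y₁)
    (ht₁ : c * (Real.exp (y₁ / 2) + Real.exp (y₂ / 2)) ≤ x₂ - x₁)
    (ht₂ : x₂ - x₁ ≤ c * Real.exp (h / 2) * (Real.exp (y₁ / 2) - Real.exp (y₂ / 2))) :
    muAlpha α β (ballTrunc c h (x₁, y₁) ∩ ballTrunc c h (x₂, y₂)) =
      ENNReal.ofReal
        (c ^ (2 * α) * ((4 * β / (2 * α - 1)) / (4 * α)) * (x₂ - x₁) ^ (1 - 2 * α) *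
            ((Real.exp (y₁ / 2) + Real.exp (y₂ / 2)) ^ (2 * α) -
              (Real.exp (y₁ / 2) - Real.exp (y₂ / 2)) ^ (2 * α)) -
          c * (4 * β / (2 * α - 1)) * Real.exp (y₂ / 2) * Real.exp ((1 / 2 - α) * h)) := by
  set Y₁ := Real.exp (y₁ / 2) with hY₁def
  set Y₂ := Real.exp (y₂ / 2) with hY₂def
  clear_value Y₁ Y₂
  set t := x₂ - x₁ with htdef
  clear_value t
  have hY₁0 : 0 < Y₁ := by rw [hY₁def]; exact Real.exp_pos _
  have hY₂0 : 0 < Y₂ := by rw [hY₂def]; exact Real.exp_pos _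
  have hYlt : Y₂ < Y₁ := by rw [hY₁def, hY₂def]; exact Real.exp_lt_exp.2 (by linarith)
  have hQ0 : 0 < Y₁ - Y₂ := by linarith
  have hP0 : 0 < Y₁ + Y₂ := by linarith
  have hcP0 : 0 < c * (Y₁ + Y₂) := by positivity
  have hcQ0 : 0 < c * (Y₁ - Y₂) := by positivity
  have ht0 : 0 < t := lt_of_lt_of_le hcP0 ht₁
  set u := t / (c * (Y₁ + Y₂)) with hudef
  clear_value u
  set v := t / (c * (Y₁ - Y₂)) with hvdef
  clear_value v
  have hu0 : 0 < u := by rw [hudef]; exact div_pos ht0 hcP0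
  have hv0 : 0 < v := by rw [hvdef]; exact div_pos ht0 hcQ0
  have hu1 : 1 ≤ u := by rw [hudef]; exact (one_le_div hcP0).2 ht₁
  have huv : u ≤ v := by
    rw [hudef, hvdef, div_le_div_iff₀ hcP0 hcQ0]
    have hle : c * (Y₁ - Y₂) ≤ c * (Y₁ + Y₂) := by nlinarith
    exact mul_le_mul_of_nonneg_left hle ht0.le
  have hcu : c * (Y₁ + Y₂) * u = t := by rw [hudef]; field_simp
  have hcv : c * (Y₁ - Y₂) * v = t := by rw [hvdef]; field_simp
  set b₁ := 2 * Real.log u with hb₁def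
  clear_value b₁
  set b₂ := 2 * Real.log v with hb₂def
  clear_value b₂
  have hb₁0 : 0 ≤ b₁ := by
    have := Real.log_nonneg hu1; linarith
  have hb₁₂ : b₁ ≤ b₂ := by
    have := Real.log_le_log hu0 huv; linarith
  have hb₂h : b₂ ≤ h := by
    have hvle : v ≤ Real.exp (h / 2) := by
      rw [hvdef, div_le_iff₀ hcQ0]
      linarith [ht₂]
    have := (Real.log_le_iff_le_exp hv0).2 hvle
    linarith
  have hexpu : Real.exp (b₁ / 2) = u := by
    rw [hb₁def]; rw [show 2 * Real.log u / 2 = Real.log u by ring, Real.exp_log hu0]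
  have hexpv : Real.exp (b₂ / 2) = v := by
    rw [hb₂def]; rw [show 2 * Real.log v / 2 = Real.log v by ring, Real.exp_log hv0]
  -- the section length function
  set r₁ : ℝ → ℝ := fun y => c * Real.exp ((y + y₁) / 2) with hr₁def
  set r₂ : ℝ → ℝ := fun y => c * Real.exp ((y + y₂) / 2) with hr₂def
  clear_value r₁ r₂
  have hr₁ : ∀ y, r₁ y = c * Real.exp (y / 2) * Y₁ := by
    intro y; rw [hr₁def]; simp only
    rw [show (y + y₁) / 2 = y / 2 + y₁ / 2 by ring, Real.exp_add, hY₁def]; ring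
  have hr₂ : ∀ y, r₂ y = c * Real.exp (y / 2) * Y₂ := by
    intro y; rw [hr₂def]; simp only
    rw [show (y + y₂) / 2 = y / 2 + y₂ / 2 by ring, Real.exp_add, hY₂def]; ring
  set L : ℝ → ℝ := fun y => min (x₁ + r₁ y) (x₂ + r₂ y) - (x₂ - r₂ y) with hLdef
  clear_value L
  set S := ballTrunc c h (x₁, y₁) ∩ ballTrunc c h (x₂, y₂) with hSdef
  clear_value S
  have hmeas₁ : MeasurableSet (ballTrunc c h (x₁, y₁)) := by
    apply MeasurableSet.inter
    · exact measurableSet_le measurable_const measurable_snd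
    apply MeasurableSet.inter
    · exact measurableSet_lt measurable_snd measurable_const
    · exact measurableSet_lt ((measurable_fst.sub measurable_const).abs)
        ((Real.measurable_exp.comp ((measurable_snd.add_const y₁).div_const 2)).const_mul c)
  have hmeas₂ : MeasurableSet (ballTrunc c h (x₂, y₂)) := by
    apply MeasurableSet.inter
    · exact measurableSet_le measurable_const measurable_snd
    apply MeasurableSet.inter
    · exact measurableSet_lt measurable_snd measurable_const
    · exact measurableSet_lt ((measurable_fst.sub measurable_const).abs)
        ((Real.measurable_exp.comp ((measurable_snd.add_const y₂).div_const 2)).const_mul c)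
  have hSmeas : MeasurableSet S := by rw [hSdef]; exact hmeas₁.inter hmeas₂
  -- sections
  have hsec : ∀ y : ℝ, (volume : Measure ℝ) {x | (x,y) ∈ S} =
      (Set.Ico (0:ℝ) h).indicator (fun y => ENNReal.ofReal (L y)) y := by
    intro y
    by_cases hy' : y ∈ Set.Ico (0:ℝ) h
    · obtain ⟨hy0, hyh⟩ := Set.mem_Ico.1 hy'
      have hset : {x | (x,y) ∈ S} =
          Set.Ioo (max (x₁ - r₁ y) (x₂ - r₂ y)) (min (x₁ + r₁ y) (x₂ + r₂ y)) := by
        ext x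
        simp only [hSdef, ballTrunc, Set.mem_setOf_eq, Set.mem_inter_iff, Set.mem_Ioo,
          max_lt_iff, lt_min_iff, abs_lt, hr₁def, hr₂def]
        constructor
        · rintro ⟨⟨-, -, h1a, h1b⟩, ⟨-, -, h2a, h2b⟩⟩
          refine ⟨⟨by linarith, by linarith⟩, by linarith, by linarith⟩
        · rintro ⟨⟨h1a, h2a⟩, h1b, h2b⟩
          exact ⟨⟨hy0, hyh, by linarith, by linarith⟩, ⟨hy0, hyh, by linarith, by linarith⟩⟩
      have hmax : max (x₁ - r₁ y) (x₂ - r₂ y) = x₂ - r₂ y := by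
        apply max_eq_right
        have h12 : r₂ y ≤ r₁ y := by
          rw [hr₁ y, hr₂ y]
          have : 0 < c * Real.exp (y / 2) := by positivity
          nlinarith
        linarith
      rw [hset, hmax, Real.volume_Ioo, Set.indicator_of_mem (Set.mem_Ico.2 ⟨hy0, hyh⟩), hLdef]
    · have hset : {x | (x,y) ∈ S} = (∅ : Set ℝ) := by
        ext x
        simp only [hSdef, ballTrunc, Set.mem_setOf_eq, Set.mem_inter_iff, Set.mem_empty_iff_false,
          iff_false]
        rintro ⟨⟨hy0, hyh, -⟩, -⟩
        exact hy' ⟨hy0, hyh⟩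
      rw [hset, Set.indicator_of_notMem hy', measure_empty]
  -- reduce the measure to a one-dimensional lintegral
  have hstep1 : muAlpha α β S =
      ∫⁻ y in Set.Ico (0:ℝ) h,
        ENNReal.ofReal (β * Real.exp (-α * y)) * ENNReal.ofReal (L y) := by
    rw [muAlpha, withDensity_apply _ hSmeas, Measure.restrict_restrict hSmeas]
    have hsub : S ∩ {p : ℝ × ℝ | 0 ≤ p.2} = S := by
      rw [hSdef]
      apply Set.inter_eq_self_of_subset_left
      rintro ⟨x, y⟩ ⟨⟨hy0, -⟩, -⟩
      exact hy0
    rw [hsub]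
    rw [sect_lemma S hSmeas (fun y => ENNReal.ofReal (β * Real.exp (-α * y)))
      (ENNReal.measurable_ofReal.comp
        ((Real.measurable_exp.comp (measurable_id.const_mul (-α))).const_mul β))]
    rw [← lintegral_indicator measurableSet_Ico]
    congr 1; funext y
    rw [hsec y]
    by_cases hy' : y ∈ Set.Ico (0:ℝ) h
    · rw [Set.indicator_of_mem hy', Set.indicator_of_mem hy']
    · rw [Set.indicator_of_notMem hy', Set.indicator_of_notMem hy', mul_zero]
  -- turn it into a real integral of F
  set F : ℝ → ℝ := fun y => β * Real.exp (-α * y) * max (L y) 0 with hFdef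
  clear_value F
  have hcontr₁ : Continuous r₁ := by rw [hr₁def]; fun_prop
  have hcontr₂ : Continuous r₂ := by rw [hr₂def]; fun_prop
  have hcontL : Continuous L := by
    rw [hLdef]
    exact ((continuous_const.add hcontr₁).min (continuous_const.add hcontr₂)).sub
      (continuous_const.sub hcontr₂)
  have hcontE : Continuous fun y : ℝ => β * Real.exp (-α * y) := by fun_prop
  have hcontF : Continuous F := by
    rw [hFdef]
    exact hcontE.mul (hcontL.max continuous_const)
  have hFnn : ∀ y, 0 ≤ F y := by
    intro y
    rw [hFdef]
    exact mul_nonneg (mul_nonneg hβ.le (Real.exp_nonneg _)) (le_max_right _ _)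
  have hstep2 : muAlpha α β S = ENNReal.ofReal (∫ y in (0:ℝ)..h, F y) := by
    rw [hstep1]
    have hptwise : ∀ y : ℝ,
        ENNReal.ofReal (β * Real.exp (-α * y)) * ENNReal.ofReal (L y) =
          ENNReal.ofReal (F y) := by
      intro y
      simp only [hFdef]
      rw [ENNReal.ofReal_mul (p := β * Real.exp (-α * y)) (by positivity), ofReal_max]
    simp only [hptwise]
    rw [← ofReal_integral_eq_lintegral_ofReal
      (hcontF.integrableOn_Icc.mono_set Set.Ico_subset_Icc_self)
      (Filter.Eventually.of_forall hFnn)]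
    congr 1
    rw [intervalIntegral.integral_of_le hh.le, MeasureTheory.integral_Ioc_eq_integral_Ioo,
      ← MeasureTheory.integral_Ico_eq_integral_Ioo]
  -- interval integral computation
  rw [hstep2]
  clear hstep1 hstep2 hsec hSmeas hmeas₁ hmeas₂ hSdef hcontE hcontr₁ hcontr₂ hcontL S
  have hk₁ : (1/2 - α : ℝ) ≠ 0 := by linarith
  have hk₂ : (-α : ℝ) ≠ 0 := by linarith
  have hint : ∀ a b : ℝ, IntervalIntegrable F volume a b :=
    fun a b => hcontF.intervalIntegrable a b
  have hIsplit : ∫ y in (0:ℝ)..h, F y =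
      (∫ y in (0:ℝ)..b₁, F y) + (∫ y in b₁..b₂, F y) + (∫ y in b₂..h, F y) := by
    rw [← intervalIntegral.integral_add_adjacent_intervals (hint 0 b₂) (hint b₂ h),
        ← intervalIntegral.integral_add_adjacent_intervals (hint 0 b₁) (hint b₁ b₂)]
  have hI1 : ∫ y in (0:ℝ)..b₁, F y = 0 := by
    have hEq : Set.EqOn F (fun _ => (0:ℝ)) (Set.uIcc 0 b₁) := by
      intro y hy
      rw [Set.uIcc_of_le hb₁0] at hy
      obtain ⟨hy0, hyb⟩ := hy
      have he : Real.exp (y/2) ≤ u := by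
        rw [← hexpu]; exact Real.exp_le_exp.2 (by linarith)
      have hcc : c * (Y₁ + Y₂) * Real.exp (y/2) ≤ t := by
        calc c * (Y₁ + Y₂) * Real.exp (y/2) ≤ c * (Y₁ + Y₂) * u :=
              mul_le_mul_of_nonneg_left he hcP0.le
          _ = t := hcu
      have hcc' : r₁ y + r₂ y ≤ t := by
        rw [hr₁ y, hr₂ y]; nlinarith only [hcc]
      have hm := min_le_left (x₁ + r₁ y) (x₂ + r₂ y)
      have hL : L y ≤ 0 := by
        simp only [hLdef]
        linarith only [hm, hcc', htdef]
      simp only [hFdef, max_eq_right hL, mul_zero]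
    rw [intervalIntegral.integral_congr hEq, intervalIntegral.integral_zero]
  have hI2 : ∫ y in b₁..b₂, F y =
      β * (c*(Y₁+Y₂)) * ((Real.exp ((1/2-α)*b₂) - Real.exp ((1/2-α)*b₁))/(1/2-α))
        - β * t * ((Real.exp ((-α)*b₂) - Real.exp ((-α)*b₁))/(-α)) := by
    have hEq : Set.EqOn F
        (fun y => β * (c*(Y₁+Y₂)) * Real.exp ((1/2-α)*y) - β * t * Real.exp ((-α)*y))
        (Set.uIcc b₁ b₂) := by
      intro y hy
      rw [Set.uIcc_of_le hb₁₂] at hy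
      obtain ⟨hy1, hy2⟩ := hy
      have hev : Real.exp (y/2) ≤ v := by
        rw [← hexpv]; exact Real.exp_le_exp.2 (by linarith)
      have heu : u ≤ Real.exp (y/2) := by
        rw [← hexpu]; exact Real.exp_le_exp.2 (by linarith)
      have hccv : c * (Y₁ - Y₂) * Real.exp (y/2) ≤ t := by
        calc c * (Y₁ - Y₂) * Real.exp (y/2) ≤ c * (Y₁ - Y₂) * v :=
              mul_le_mul_of_nonneg_left hev hcQ0.le
          _ = t := hcv
      have hccu : t ≤ c * (Y₁ + Y₂) * Real.exp (y/2) := by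
        calc t = c * (Y₁ + Y₂) * u := hcu.symm
          _ ≤ c * (Y₁ + Y₂) * Real.exp (y/2) := mul_le_mul_of_nonneg_left heu hcP0.le
      have hrr : r₁ y - r₂ y ≤ t := by
        rw [hr₁ y, hr₂ y]; nlinarith only [hccv]
      have hmin : min (x₁ + r₁ y) (x₂ + r₂ y) = x₁ + r₁ y := by
        apply min_eq_left
        linarith only [hrr, htdef]
      have hLy : L y = c*(Y₁+Y₂)*Real.exp (y/2) - t := by
        simp only [hLdef]
        rw [hmin, hr₁ y, hr₂ y, htdef]
        ring
      have hLpos : 0 ≤ L y := by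
        rw [hLy]
        linarith only [hccu]
      simp only [hFdef]
      rw [max_eq_left hLpos, hLy]
      have hee : Real.exp ((1/2-α)*y) = Real.exp (-α*y) * Real.exp (y/2) := by
        rw [← Real.exp_add]; congr 1; ring
      rw [hee]; ring
    rw [intervalIntegral.integral_congr hEq]
    have hi1 : IntervalIntegrable (fun y => β * (c*(Y₁+Y₂)) * Real.exp ((1/2-α)*y))
        volume b₁ b₂ := (by fun_prop : Continuous _).intervalIntegrable _ _
    have hi2 : IntervalIntegrable (fun y => β * t * Real.exp ((-α)*y))
        volume b₁ b₂ := (by fun_prop : Continuous _).intervalIntegrable _ _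
    rw [intervalIntegral.integral_sub hi1 hi2, intervalIntegral.integral_const_mul,
      intervalIntegral.integral_const_mul, int_exp _ _ _ hk₁, int_exp _ _ _ hk₂]
  have hI3 : ∫ y in b₂..h, F y =
      β * (2*c*Y₂) * ((Real.exp ((1/2-α)*h) - Real.exp ((1/2-α)*b₂))/(1/2-α)) := by
    have hEq : Set.EqOn F (fun y => β * (2*c*Y₂) * Real.exp ((1/2-α)*y))
        (Set.uIcc b₂ h) := by
      intro y hy
      rw [Set.uIcc_of_le hb₂h] at hy
      obtain ⟨hy1, hy2⟩ := hy
      have hev : v ≤ Real.exp (y/2) := by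
        rw [← hexpv]; exact Real.exp_le_exp.2 (by linarith)
      have hccv : t ≤ c * (Y₁ - Y₂) * Real.exp (y/2) := by
        calc t = c * (Y₁ - Y₂) * v := hcv.symm
          _ ≤ c * (Y₁ - Y₂) * Real.exp (y/2) := mul_le_mul_of_nonneg_left hev hcQ0.le
      have hrr : t ≤ r₁ y - r₂ y := by
        rw [hr₁ y, hr₂ y]; nlinarith only [hccv]
      have hmin : min (x₁ + r₁ y) (x₂ + r₂ y) = x₂ + r₂ y := by
        apply min_eq_right
        linarith only [hrr, htdef]
      have hLy : L y = 2*c*Y₂*Real.exp (y/2) := by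
        simp only [hLdef]
        rw [hmin, hr₂ y]
        ring
      have hLpos : 0 ≤ L y := by
        rw [hLy]; positivity
      simp only [hFdef]
      rw [max_eq_left hLpos, hLy]
      have hee : Real.exp ((1/2-α)*y) = Real.exp (-α*y) * Real.exp (y/2) := by
        rw [← Real.exp_add]; congr 1; ring
      rw [hee]; ring
    rw [intervalIntegral.integral_congr hEq, intervalIntegral.integral_const_mul,
      int_exp _ _ _ hk₁]
  -- rpow expressions for the exponentials
  have e₁ : Real.exp ((1/2-α)*b₁) = u ^ (1-2*α) := by
    rw [hb₁def, Real.rpow_def_of_pos hu0]; congr 1; ring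
  have e₂ : Real.exp ((1/2-α)*b₂) = v ^ (1-2*α) := by
    rw [hb₂def, Real.rpow_def_of_pos hv0]; congr 1; ring
  have e₃ : Real.exp ((-α)*b₁) = u ^ (-(2*α)) := by
    rw [hb₁def, Real.rpow_def_of_pos hu0]; congr 1; ring
  have e₄ : Real.exp ((-α)*b₂) = v ^ (-(2*α)) := by
    rw [hb₂def, Real.rpow_def_of_pos hv0]; congr 1; ring
  -- rpow algebra
  have hT0 : (0:ℝ) < t ^ (1-2*α) := Real.rpow_pos_of_pos ht0 _
  have key : ∀ w P : ℝ, 0 < P → w = t / P →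
      P * w ^ (1-2*α) = t^(1-2*α) * P^(2*α) ∧ t * w ^ (-(2*α)) = t^(1-2*α) * P^(2*α) := by
    intro w P hP hw
    have hPa : (0:ℝ) < P^(2*α) := Real.rpow_pos_of_pos hP _
    have hta : (0:ℝ) < t^(2*α) := Real.rpow_pos_of_pos ht0 _
    have h1 : t^(1-2*α) * t^(2*α) = t := by
      rw [← Real.rpow_add ht0, show (1-2*α)+(2*α) = 1 by ring, Real.rpow_one]
    have h2 : P^(1-2*α) * P^(2*α) = P := by
      rw [← Real.rpow_add hP, show (1-2*α)+(2*α) = 1 by ring, Real.rpow_one]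
    constructor
    · rw [hw, Real.div_rpow ht0.le hP.le]
      have hP1a : (0:ℝ) < P^(1-2*α) := Real.rpow_pos_of_pos hP _
      field_simp
      linear_combination (-1) * h2
    · rw [hw, Real.rpow_neg (div_nonneg ht0.le hP.le), Real.div_rpow ht0.le hP.le, inv_div]
      field_simp
      linear_combination (-1) * h1
  obtain ⟨gP1, gP2⟩ := key u (c*(Y₁+Y₂)) hcP0 hudef
  obtain ⟨gQ1, gQ2⟩ := key v (c*(Y₁-Y₂)) hcQ0 hvdef
  have hA : (c*(Y₁+Y₂)) ^ (2*α) = c^(2*α) * (Y₁+Y₂)^(2*α) := Real.mul_rpow hc.le hP0.le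
  have hB : (c*(Y₁-Y₂)) ^ (2*α) = c^(2*α) * (Y₁-Y₂)^(2*α) := Real.mul_rpow hc.le hQ0.le
  rw [hA] at gP1 gP2
  rw [hB] at gQ1 gQ2
  have rU1 : u ^ (1-2*α) = t^(1-2*α) * (c^(2*α) * (Y₁+Y₂)^(2*α)) / (c*(Y₁+Y₂)) := by
    rw [eq_div_iff hcP0.ne']
    linear_combination gP1
  have rV1 : v ^ (1-2*α) = t^(1-2*α) * (c^(2*α) * (Y₁-Y₂)^(2*α)) / (c*(Y₁-Y₂)) := by
    rw [eq_div_iff hcQ0.ne']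
    linear_combination gQ1
  have rU2 : u ^ (-(2*α)) = t^(1-2*α) * (c^(2*α) * (Y₁+Y₂)^(2*α)) / t := by
    rw [eq_div_iff ht0.ne']
    linear_combination gP2
  have rV2 : v ^ (-(2*α)) = t^(1-2*α) * (c^(2*α) * (Y₁-Y₂)^(2*α)) / t := by
    rw [eq_div_iff ht0.ne']
    linear_combination gQ2
  congr 1
  rw [hIsplit, hI1, hI2, hI3, e₁, e₂, e₃, e₄, rU1, rV1, rU2, rV2]
  have h2α : (2*α - 1 : ℝ) ≠ 0 := by intro hcon; linarith only [hα, hcon]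
  have hαne : (α:ℝ) ≠ 0 := by intro hcon; linarith only [hα, hcon]
  set K := (1:ℝ)/2 - α with hK
  set M := 2*α - 1 with hM
  set CP := c*(Y₁+Y₂) with hCP
  set CQ := c*(Y₁-Y₂) with hCQ
  have hKne : K ≠ 0 := hk₁
  have hMne : M ≠ 0 := h2α
  have hCPne : CP ≠ 0 := mul_ne_zero hc.ne' hP0.ne'
  have hCQne : CQ ≠ 0 := mul_ne_zero hc.ne' hQ0.ne'
  field_simp
  simp only [hK, hM, hCP, hCQ]
  ring
end

section
/- Let α > 1/2, β > 0, and set γ := 4β/(2α − 1). Let μ_α be the measure on ℝ × [0,∞) with density β·e^{−αy} with respect to Lebesgue measure d x d y. Let c > 0, h > 0, let 0 ≤ y₂ ≤ y₁, set Y₁ := e^{y₁/2}, Y₂ := e^{y₂/2}, and let p₁ = (x₁, y₁), p₂ = (x₂, y₂) be points with t := x₂ − x₁ satisfying c(Y₁ + Y₂) ≤ t, c·e^{h/2}·(Y₁ − Y₂) ≤ t and t ≤ c·e^{h/2}·(Y₁ + Y₂). Define B_h^c(p) := {(x,y) : 0 ≤ y < h, |x − x_p| < c·e^{(y + y_p)/2}}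 for p = (x_p, y_p). Then μ_α(B_h^c(p₁) ∩ B_h^c(p₂)) = c^{2α}·(β/(α(2α − 1)))·t^{1−2α}·(Y₁ + Y₂)^{2α} + (β/α)·t·e^{−αh} − c·(γ/2)·(Y₁ + Y₂)·e^{(1/2 − α)h}. -/
open MeasureTheory

set_option maxHeartbeats 1600000 in
theorem stmt9 (α β c h x₁ x₂ y₁ y₂ : ℝ) (hα : 1 / 2 < α) (hβ : 0 < β)
    (hc : 0 < c) (hh : 0 < h) (hy₂ : 0 ≤ y₂) (hy : y₂ ≤ y₁)
    (ht₁ : c * (Real.exp (y₁ / 2) + Real.exp (y₂ / 2)) ≤ x₂ - x₁)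
    (ht₂ : c * Real.exp (h / 2) * (Real.exp (y₁ / 2) - Real.exp (y₂ / 2)) ≤ x₂ - x₁)
    (ht₃ : x₂ - x₁ ≤ c * Real.exp (h / 2) * (Real.exp (y₁ / 2) + Real.exp (y₂ / 2))) :
    muAlpha α β (ballTrunc c h (x₁, y₁) ∩ ballTrunc c h (x₂, y₂)) =
      ENNReal.ofReal
        (c ^ (2 * α) * (β / (α * (2 * α - 1))) * (x₂ - x₁) ^ (1 - 2 * α) *
            (Real.exp (y₁ / 2) + Real.exp (y₂ / 2)) ^ (2 * α) +
          (β / α) * (x₂ - x₁) * Real.exp (-α * h) -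
          c * ((4 * β / (2 * α - 1)) / 2) * (Real.exp (y₁ / 2) + Real.exp (y₂ / 2)) *
            Real.exp ((1 / 2 - α) * h)) := by
  set Y₁ := Real.exp (y₁ / 2) with hY1def
  set Y₂ := Real.exp (y₂ / 2) with hY2def
  set S := Y₁ + Y₂ with hSdef
  set t := x₂ - x₁ with htdef
  have hY1 : 0 < Y₁ := Real.exp_pos _
  have hY2 : 0 < Y₂ := Real.exp_pos _
  have hS : 0 < S := by positivity
  have hY : Y₂ ≤ Y₁ := Real.exp_le_exp.2 (by linarith)
  have hcS : 0 < c * S := by positivity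
  have ht : 0 < t := lt_of_lt_of_le hcS ht₁
  have hα0 : α ≠ 0 := by positivity
  have hα1 : (0:ℝ) < α - 1/2 := by linarith
  have hα2 : (0:ℝ) < 2*α - 1 := by linarith
  set u := t / (c * S) with hudef
  have hu : 0 < u := by positivity
  set y₀ := 2 * Real.log u with hy₀def
  have hey₀ : Real.exp (y₀ / 2) = u := by
    rw [hy₀def, show 2 * Real.log u / 2 = Real.log u by ring, Real.exp_log hu]
  have hy₀0 : 0 ≤ y₀ := by
    have h1 : (1:ℝ) ≤ u := (one_le_div hcS).2 ht₁
    have := Real.log_nonneg h1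
    rw [hy₀def]; linarith
  have hy₀h : y₀ ≤ h := by
    have h1 : Real.exp (y₀ / 2) ≤ Real.exp (h / 2) := by
      rw [hey₀, hudef, div_le_iff₀ hcS]
      calc t ≤ c * Real.exp (h/2) * S := ht₃
        _ = Real.exp (h/2) * (c * S) := by ring
    have := Real.exp_le_exp.1 h1; linarith
  have hut : u * (c * S) = t := div_mul_cancel₀ t hcS.ne'
  -- the set as a region between graphs
  set A' : Set (ℝ × ℝ) := {q | q.2 ∈ Set.Ioo y₀ h ∧
      q.1 ∈ Set.Ioo (x₂ - c * Real.exp (q.2 / 2) * Y₂) (x₁ + c * Real.exp (q.2 / 2) * Y₁)}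
    with hA'def
  have hA : ballTrunc c h (x₁, y₁) ∩ ballTrunc c h (x₂, y₂) = A' := by
    ext ⟨x, y⟩
    have hE : 0 < Real.exp (y / 2) := Real.exp_pos _
    have e1 : Real.exp ((y + y₁) / 2) = Real.exp (y / 2) * Y₁ := by
      rw [hY1def, ← Real.exp_add]; ring_nf
    have e2 : Real.exp ((y + y₂) / 2) = Real.exp (y / 2) * Y₂ := by
      rw [hY2def, ← Real.exp_add]; ring_nf
    simp only [Set.mem_inter_iff, ballTrunc, Set.mem_setOf_eq, abs_sub_lt_iff, hA'def,
      Set.mem_Ioo, e1, e2]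
    constructor
    · rintro ⟨⟨hy0, hyh, h1a, h1b⟩, ⟨-, -, h2a, h2b⟩⟩
      refine ⟨⟨?_, hyh⟩, by linarith, by linarith⟩
      have hlt : Real.exp (y₀ / 2) * (c * S) < Real.exp (y / 2) * (c * S) := by
        rw [hey₀, hut]
        nlinarith
      have := Real.exp_lt_exp.1 ((mul_lt_mul_iff_left₀ hcS).1 hlt)
      linarith
    · rintro ⟨⟨hy0', hyh⟩, hxa, hxb⟩
      have hyy0 : 0 ≤ y := le_trans hy₀0 hy0'.le
      have hEh : Real.exp (y / 2) ≤ Real.exp (h / 2) := Real.exp_le_exp.2 (by linarith)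
      have hfac : c * Real.exp (y / 2) * (Y₁ - Y₂) ≤ t :=
        le_trans (mul_le_mul_of_nonneg_right (mul_le_mul_of_nonneg_left hEh hc.le)
          (sub_nonneg.2 hY)) ht₂
      have hfac2 : (0:ℝ) ≤ c * Real.exp (y / 2) * (Y₁ - Y₂) :=
        mul_nonneg (mul_nonneg hc.le hE.le) (sub_nonneg.2 hY)
      have h5 : c * Real.exp (y / 2) * (Y₁ - Y₂)
          = c * (Real.exp (y / 2) * Y₁) - c * (Real.exp (y / 2) * Y₂) := by ring
      refine ⟨⟨hyy0, hyh, by linarith, ?_⟩, hyy0, hyh, by linarith, ?_⟩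
      · linarith [hxa, htdef, hfac2, h5, ht]
      · linarith [hxb, htdef, hfac, h5]
  have hA'meas : MeasurableSet A' := by
    have h1 : A' = ({q : ℝ × ℝ | y₀ < q.2} ∩ {q | q.2 < h} ∩
        {q | x₂ - c * Real.exp (q.2 / 2) * Y₂ < q.1}) ∩
        {q | q.1 < x₁ + c * Real.exp (q.2 / 2) * Y₁} := by
      ext q; simp only [hA'def, Set.mem_setOf_eq, Set.mem_Ioo, Set.mem_inter_iff]; tauto
    have hm : Measurable fun q : ℝ × ℝ => Real.exp (q.2 / 2) :=
      Real.measurable_exp.comp (measurable_snd.div_const 2)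
    rw [h1]
    exact (((measurableSet_lt measurable_const measurable_snd).inter
      (measurableSet_lt measurable_snd measurable_const)).inter
      (measurableSet_lt (measurable_const.sub ((hm.const_mul c).mul_const Y₂)) measurable_fst)).inter
      (measurableSet_lt measurable_fst (measurable_const.add ((hm.const_mul c).mul_const Y₁)))
  have hsub : A' ⊆ {p : ℝ × ℝ | 0 ≤ p.2} := fun q hq => le_trans hy₀0 hq.1.1.le
  set D : ℝ × ℝ → ENNReal := fun p => ENNReal.ofReal (β * Real.exp (-α * p.2)) with hDdef
  have hDmeas : Measurable D :=
    ENNReal.measurable_ofReal.comp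
      (measurable_const.mul (Real.measurable_exp.comp (measurable_snd.const_mul (-α))))
  rw [hA, muAlpha, withDensity_apply _ hA'meas, Measure.restrict_restrict hA'meas,
    Set.inter_eq_left.mpr hsub]
  have step1 : ∫⁻ q in A', D q = ∫⁻ y in Set.Ioo y₀ h,
      ENNReal.ofReal (β * Real.exp (-α * y)) * ENNReal.ofReal (c * Real.exp (y / 2) * S - t) := by
    rw [← lintegral_indicator hA'meas, Measure.volume_eq_prod,
      lintegral_prod_symm _ (hDmeas.indicator hA'meas).aemeasurable]
    rw [← lintegral_indicator (measurableSet_Ioo (a := y₀) (b := h))]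
    congr 1
    funext y
    by_cases hy' : y ∈ Set.Ioo y₀ h
    · rw [Set.indicator_of_mem hy']
      have hfun : (fun x => A'.indicator D (x, y)) =
          (Set.Ioo (x₂ - c * Real.exp (y / 2) * Y₂) (x₁ + c * Real.exp (y / 2) * Y₁)).indicator
            (fun _ => ENNReal.ofReal (β * Real.exp (-α * y))) := by
        funext x
        by_cases hx : x ∈ Set.Ioo (x₂ - c * Real.exp (y / 2) * Y₂) (x₁ + c * Real.exp (y / 2) * Y₁)
        · rw [Set.indicator_of_mem hx, Set.indicator_of_mem (show (x, y) ∈ A' from ⟨hy', hx⟩)]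
        · rw [Set.indicator_of_notMem hx,
            Set.indicator_of_notMem (fun hmem => hx hmem.2)]
      rw [hfun, lintegral_indicator measurableSet_Ioo, setLIntegral_const, Real.volume_Ioo]
      congr 1
      rw [hSdef, htdef]; ring
    · rw [Set.indicator_of_notMem hy']
      have hz : ∀ x : ℝ, A'.indicator D (x, y) = 0 := fun x =>
        Set.indicator_of_notMem (fun hmem => hy' hmem.1) _
      simp [hz]
  rw [step1]
  have step2 : ∫⁻ y in Set.Ioo y₀ h,
      ENNReal.ofReal (β * Real.exp (-α * y)) * ENNReal.ofReal (c * Real.exp (y / 2) * S - t)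
      = ∫⁻ y in Set.Ioo y₀ h,
        ENNReal.ofReal (β * Real.exp (-α * y) * (c * Real.exp (y / 2) * S - t)) := by
    refine setLIntegral_congr_fun measurableSet_Ioo (fun y hy => ?_)
    rw [← ENNReal.ofReal_mul (by positivity)]
  rw [step2]
  have hg_nonneg : ∀ y ∈ Set.Ioo y₀ h, 0 ≤ β * Real.exp (-α * y) * (c * Real.exp (y / 2) * S - t) := by
    intro y hy
    have h1 : Real.exp (y₀ / 2) ≤ Real.exp (y / 2) := Real.exp_le_exp.2 (by linarith [hy.1])
    have h2 : t ≤ c * Real.exp (y / 2) * S := by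
      rw [hey₀] at h1
      calc t = u * (c * S) := hut.symm
        _ ≤ Real.exp (y / 2) * (c * S) := mul_le_mul_of_nonneg_right h1 hcS.le
        _ = c * Real.exp (y / 2) * S := by ring
    exact mul_nonneg (mul_nonneg hβ.le (Real.exp_pos _).le) (sub_nonneg.2 h2)
  have hg_cont : Continuous fun y : ℝ => β * Real.exp (-α * y) * (c * Real.exp (y / 2) * S - t) := by
    fun_prop
  have hint : IntegrableOn (fun y : ℝ => β * Real.exp (-α * y) * (c * Real.exp (y / 2) * S - t))
      (Set.Ioo y₀ h) volume :=
    (hg_cont.integrableOn_Icc (a := y₀) (b := h)).mono_set Set.Ioo_subset_Icc_self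
  rw [← ofReal_integral_eq_lintegral_ofReal hint
    ((ae_restrict_iff' measurableSet_Ioo).2 (ae_of_all _ hg_nonneg))]
  congr 1
  -- evaluate the real integral
  have hFTC : ∫ y in Set.Ioo y₀ h, β * Real.exp (-α * y) * (c * Real.exp (y / 2) * S - t)
      = (β * (t * Real.exp (-α * h) / α - c * S * Real.exp ((1/2 - α) * h) / (α - 1/2)))
        - (β * (t * Real.exp (-α * y₀) / α - c * S * Real.exp ((1/2 - α) * y₀) / (α - 1/2))) := by
    rw [← integral_Ioc_eq_integral_Ioo, ← intervalIntegral.integral_of_le hy₀h]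
    refine intervalIntegral.integral_eq_sub_of_hasDerivAt (f := fun y =>
      β * (t * Real.exp (-α * y) / α - c * S * Real.exp ((1/2 - α) * y) / (α - 1/2)))
      (fun y _ => ?_) (hg_cont.intervalIntegrable _ _)
    have base1 : HasDerivAt (fun y : ℝ => -α * y) (-α) y := by
      simpa using (hasDerivAt_id y).const_mul (-α)
    have base2 : HasDerivAt (fun y : ℝ => (1/2 - α) * y) (1/2 - α) y := by
      simpa using (hasDerivAt_id y).const_mul (1/2 - α)
    have d1 : HasDerivAt (fun y : ℝ => Real.exp (-α * y)) (Real.exp (-α * y) * (-α)) y :=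
      base1.exp
    have d2 : HasDerivAt (fun y : ℝ => Real.exp ((1/2 - α) * y))
        (Real.exp ((1/2 - α) * y) * (1/2 - α)) y := base2.exp
    have hexp : Real.exp ((1/2 - α) * y) = Real.exp (y / 2) * Real.exp (-α * y) := by
      rw [← Real.exp_add]; ring_nf
    have := ((((d1.const_mul t).div_const α).sub
      ((d2.const_mul (c * S)).div_const (α - 1/2))).const_mul β)
    refine this.congr_deriv ?_
    have h3 : α - 1/2 ≠ 0 := hα1.ne'
    have r1 : t * (Real.exp (-α * y) * -α) / α = -(t * Real.exp (-α * y)) := by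
      rw [div_eq_iff hα0]; ring
    have r2 : c * S * (Real.exp ((1/2 - α) * y) * (1/2 - α)) / (α - 1/2)
        = -(c * S * Real.exp ((1/2 - α) * y)) := by
      rw [div_eq_iff h3]; ring
    rw [r1, r2, hexp]; ring
  rw [hFTC]
  -- rewrite the boundary terms at y₀
  have hur : ∀ r : ℝ, u ^ r = t ^ r * (c * S) ^ (-r) := fun r => by
    rw [hudef, Real.div_rpow ht.le hcS.le, Real.rpow_neg hcS.le, div_eq_mul_inv]
  have hu1 : Real.exp (-α * y₀) = u ^ (-(2 * α)) := by
    rw [Real.rpow_def_of_pos hu, hy₀def]; congr 1; ring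
  have hu2 : Real.exp ((1/2 - α) * y₀) = u ^ (1 - 2 * α) := by
    rw [Real.rpow_def_of_pos hu, hy₀def]; congr 1; ring
  have hK1 : t * Real.exp (-α * y₀) = (c * S) ^ (2 * α) * t ^ (1 - 2 * α) := by
    have e := Real.rpow_add ht 1 (-(2 * α))
    rw [Real.rpow_one, show (1:ℝ) + -(2 * α) = 1 - 2 * α by ring] at e
    rw [hu1, hur, neg_neg, e]; ring
  have hK2 : c * S * Real.exp ((1/2 - α) * y₀) = (c * S) ^ (2 * α) * t ^ (1 - 2 * α) := by
    have e := Real.rpow_add hcS 1 (-(1 - 2 * α))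
    rw [Real.rpow_one, show (1:ℝ) + -(1 - 2 * α) = 2 * α by ring] at e
    rw [hu2, hur, e]; ring
  have hcsS : (c * S) ^ (2 * α) = c ^ (2 * α) * S ^ (2 * α) := Real.mul_rpow hc.le hS.le
  have h2 : (2:ℝ) * α - 1 ≠ 0 := hα2.ne'
  have h3 : α - 1/2 ≠ 0 := hα1.ne'
  have q1 : 4 * β / (2 * α - 1) / 2 = β / (α - 1/2) := by
    rw [div_div, div_eq_div_iff (mul_ne_zero h2 two_ne_zero) h3]; ring
  have q2 : β / (α * (2 * α - 1)) = β / (α - 1/2) - β / α := by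
    rw [div_sub_div _ _ h3 hα0, div_eq_div_iff (mul_ne_zero hα0 h2) (mul_ne_zero h3 hα0)]; ring
  rw [hK1, hK2, hcsS, q1, q2]
  ring
end

section
/- Fix α > 1/2, β > 0, C > 0 and c > 0, and let μ_α be the measure on ℝ × [0,∞) with density β·e^{−αy} with respect to Lebesgue measure. There exist constants K > 0 and R₀ > 0 such that for all R ≥ R₀, all 0 ≤ y₂ ≤ y₁ ≤ 4·log R, setting Y₁ := e^{y₁/2}, Y₂ := e^{y₂/2} and h := R − y₁ − C, and for every t with e^{R/4}·(Y₁ + Y₂) < t < (π/2)·e^{R/2}, the points p₁ := (0, y₁) and p₂ := (t, y₂) satisfy μ_α(B_h^c(p₁) ∩ B_h^c(p₂)) ≤ K·( t^{1−2α}·(Y₁ + Y₂)^{2α} + e^{(1/2 − α)R}·Y₁^{2α} ), where B_h^c(p) := {(x,y) : 0 ≤ y < h, |x − x_p| < c·e^{(y + y_p)/2}} for p = (x_p, y_p). -/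
open MeasureTheory

lemma rect_bound (α β x₀ w m : ℝ) (hβ : 0 < β) (hα : 0 < α) (hw : 0 ≤ w) :
    muAlpha α β (Set.Ioo (x₀ - w) (x₀ + w) ×ˢ Set.Ico m (m + 1)) ≤
      ENNReal.ofReal (β * Real.exp (-α * m) * (2 * w)) := by
  set A : Set (ℝ × ℝ) := Set.Ioo (x₀ - w) (x₀ + w) ×ˢ Set.Ico m (m + 1) with hAdef
  have hA : MeasurableSet A := measurableSet_Ioo.prod measurableSet_Ico
  have hvol : volume A = ENNReal.ofReal (2 * w) := by
    rw [hAdef, Measure.volume_eq_prod, Measure.prod_prod, Real.volume_Ioo, Real.volume_Ico]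
    rw [show x₀ + w - (x₀ - w) = 2 * w by ring, show m + 1 - m = (1:ℝ) by ring]
    simp
  have hres : ((volume : Measure (ℝ × ℝ)).restrict {p : ℝ × ℝ | 0 ≤ p.2}).restrict A ≤
      (volume : Measure (ℝ × ℝ)).restrict A := by
    rw [Measure.restrict_restrict hA]
    exact Measure.restrict_mono Set.inter_subset_left le_rfl
  rw [muAlpha, withDensity_apply _ hA]
  calc ∫⁻ q in A, ENNReal.ofReal (β * Real.exp (-α * q.2))
        ∂((volume : Measure (ℝ × ℝ)).restrict {p : ℝ × ℝ | 0 ≤ p.2})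
      ≤ ∫⁻ q in A, ENNReal.ofReal (β * Real.exp (-α * q.2)) ∂(volume : Measure (ℝ × ℝ)) :=
        lintegral_mono' hres le_rfl
    _ ≤ ∫⁻ _q in A, ENNReal.ofReal (β * Real.exp (-α * m)) ∂(volume : Measure (ℝ × ℝ)) := by
        apply setLIntegral_mono' hA
        intro q hq
        apply ENNReal.ofReal_le_ofReal
        have hm : m ≤ q.2 := hq.2.1
        have : Real.exp (-α * q.2) ≤ Real.exp (-α * m) := Real.exp_le_exp.mpr (by nlinarith)
        nlinarith [Real.exp_pos (-α * m)]
    _ = ENNReal.ofReal (β * Real.exp (-α * m)) * volume A := setLIntegral_const A _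
    _ = ENNReal.ofReal (β * Real.exp (-α * m) * (2 * w)) := by
        rw [hvol, ← ENNReal.ofReal_mul (by positivity)]

lemma geom_tsum (D r : ℝ) (hD : 0 ≤ D) (hr0 : 0 ≤ r) (hr1 : r < 1) :
    ∑' n : ℕ, ENNReal.ofReal (D * r ^ n) = ENNReal.ofReal (D / (1 - r)) := by
  have h1 : ∀ n : ℕ, ENNReal.ofReal (D * r ^ n) = ENNReal.ofReal D * (ENNReal.ofReal r) ^ n := by
    intro n; rw [ENNReal.ofReal_mul hD, ENNReal.ofReal_pow hr0]
  rw [tsum_congr h1, ENNReal.tsum_mul_left, ENNReal.tsum_geometric,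
    ← ENNReal.ofReal_one, ← ENNReal.ofReal_sub _ hr0,
    ← ENNReal.ofReal_inv_of_pos (by linarith), ← ENNReal.ofReal_mul hD, div_eq_mul_inv]

theorem stmt10 (α β C c : ℝ) (hα : 1 / 2 < α) (hβ : 0 < β) (hC : 0 < C) (hc : 0 < c) :
    ∃ K R₀ : ℝ, 0 < K ∧ 0 < R₀ ∧ ∀ R : ℝ, R₀ ≤ R → ∀ y₁ y₂ : ℝ,
      0 ≤ y₂ → y₂ ≤ y₁ → y₁ ≤ 4 * Real.log R →
        ∀ t : ℝ, Real.exp (R / 4) * (Real.exp (y₁ / 2) + Real.exp (y₂ / 2)) < t →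
          t < (Real.pi / 2) * Real.exp (R / 2) →
            muAlpha α β
                (ballTrunc c (R - y₁ - C) (0, y₁) ∩ ballTrunc c (R - y₁ - C) (t, y₂)) ≤
              ENNReal.ofReal
                (K * (t ^ (1 - 2 * α) * (Real.exp (y₁ / 2) + Real.exp (y₂ / 2)) ^ (2 * α) +
                  Real.exp ((1 / 2 - α) * R) * Real.exp (y₁ / 2) ^ (2 * α))) := by
  have hr1 : Real.exp (1 / 2 - α) < 1 := Real.exp_lt_one_iff.mpr (by linarith)
  have hr0 : (0:ℝ) < Real.exp (1 / 2 - α) := Real.exp_pos _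
  set K : ℝ := 2 * β * c ^ (2 * α) * Real.exp (1 / 2) / (1 - Real.exp (1 / 2 - α)) with hKdef
  have hK : 0 < K := by
    apply div_pos _ (by linarith)
    have := Real.rpow_pos_of_pos hc (2 * α)
    positivity
  refine ⟨K, 1, hK, one_pos, ?_⟩
  intro R hR y₁ y₂ hy₂ hy21 hy14 t ht₁ ht₂
  set Y : ℝ := Real.exp (y₁ / 2) + Real.exp (y₂ / 2) with hYdef
  have hY : 0 < Y := by positivity
  have ht : 0 < t := lt_trans (by positivity) ht₁
  have hcY : 0 < c * Y := by positivity
  set a : ℝ := 2 * Real.log (t / (c * Y)) with hadef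
  set w : ℕ → ℝ := fun n => c * Y * Real.exp ((a + n + 1) / 2) with hwdef
  -- subset of union of rectangles
  have hsub : ballTrunc c (R - y₁ - C) (0, y₁) ∩ ballTrunc c (R - y₁ - C) (t, y₂) ⊆
      ⋃ n : ℕ, (Set.Ioo (t - w n) (t + w n) ×ˢ Set.Ico (a + n) (a + n + 1)) := by
    rintro ⟨x, y⟩ ⟨⟨hy0, _, hx1⟩, ⟨_, _, hx2⟩⟩
    simp only [ballTrunc, Set.mem_setOf_eq] at hx1 hx2
    have hx1' : |x| < c * Real.exp ((y + y₁) / 2) := by simpa using hx1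
    have hkey : a < y := by
      have h1 : t ≤ |x| + |x - t| := by
        have := abs_sub_abs_le_abs_sub x (x - t)
        have h2 : |t| = t := abs_of_pos ht
        calc t = |t| := h2.symm
          _ = |x - (x - t)| := by ring_nf
          _ ≤ |x| + |x - t| := abs_sub x (x - t)
      have hsum : c * Real.exp ((y + y₁) / 2) + c * Real.exp ((y + y₂) / 2)
          = c * Real.exp (y / 2) * Y := by
        rw [hYdef, show (y + y₁) / 2 = y / 2 + y₁ / 2 by ring,
          show (y + y₂) / 2 = y / 2 + y₂ / 2 by ring, Real.exp_add, Real.exp_add]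
        ring
      have h3 : t < c * Real.exp (y / 2) * Y := by
        calc t ≤ |x| + |x - t| := h1
          _ < c * Real.exp ((y + y₁) / 2) + c * Real.exp ((y + y₂) / 2) :=
            add_lt_add hx1' hx2
          _ = c * Real.exp (y / 2) * Y := hsum
      have h4 : t / (c * Y) < Real.exp (y / 2) := by
        rw [div_lt_iff₀ hcY]; nlinarith
      have h5 : Real.log (t / (c * Y)) < y / 2 := by
        calc Real.log (t / (c * Y)) < Real.log (Real.exp (y / 2)) :=
          Real.log_lt_log (div_pos ht hcY) h4
          _ = y / 2 := Real.log_exp _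
      rw [hadef]; linarith
    refine Set.mem_iUnion.mpr ⟨⌊y - a⌋₊, ?_⟩
    have hfl : a + (⌊y - a⌋₊ : ℝ) ≤ y := by
      have := Nat.floor_le (le_of_lt (sub_pos.mpr hkey))
      linarith
    have hfl2 : y < a + (⌊y - a⌋₊ : ℝ) + 1 := by
      have := Nat.lt_floor_add_one (y - a)
      linarith
    constructor
    · -- x coordinate
      simp only [Set.mem_Ioo]
      have hxle : |x - t| < w ⌊y - a⌋₊ := by
        rw [hwdef]
        calc |x - t| < c * Real.exp ((y + y₂) / 2) := hx2
          _ ≤ c * Y * Real.exp ((a + ⌊y - a⌋₊ + 1) / 2) := by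
            rw [show (y + y₂) / 2 = y / 2 + y₂ / 2 by ring, Real.exp_add]
            have e1 : Real.exp (y / 2) ≤ Real.exp ((a + ⌊y - a⌋₊ + 1) / 2) :=
              Real.exp_le_exp.mpr (by linarith)
            have e2 : Real.exp (y₂ / 2) ≤ Y := by
              rw [hYdef]; nlinarith [Real.exp_pos (y₁ / 2)]
            calc c * (Real.exp (y / 2) * Real.exp (y₂ / 2))
                ≤ c * (Real.exp ((a + ⌊y - a⌋₊ + 1) / 2) * Y) := by
                  apply mul_le_mul_of_nonneg_left _ hc.le
                  exact mul_le_mul e1 e2 (Real.exp_pos _).le (Real.exp_pos _).le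
              _ = c * Y * Real.exp ((a + ⌊y - a⌋₊ + 1) / 2) := by ring
      rw [abs_sub_lt_iff] at hxle
      constructor <;> linarith [hxle.1, hxle.2]
    · exact ⟨hfl, hfl2⟩
  set D : ℝ := 2 * β * c * Y * Real.exp (1 / 2) * Real.exp ((1 / 2 - α) * a) with hDdef
  have hD : 0 ≤ D := by positivity
  have hterm : ∀ n : ℕ, β * Real.exp (-α * (a + n)) * (2 * w n)
      = D * (Real.exp (1 / 2 - α)) ^ n := by
    intro n
    have h2 : (Real.exp (1 / 2 - α)) ^ n = Real.exp ((1 / 2 - α) * n) := by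
      rw [← Real.exp_nat_mul, mul_comm]
    have h1 : Real.exp (-α * (a + n)) * Real.exp ((a + n + 1) / 2)
        = Real.exp (1 / 2) * (Real.exp ((1 / 2 - α) * a) * Real.exp ((1 / 2 - α) * n)) := by
      rw [← Real.exp_add, ← Real.exp_add, ← Real.exp_add]
      congr 1
      ring
    rw [hDdef, hwdef, h2]
    calc β * Real.exp (-α * (a + n)) * (2 * (c * Y * Real.exp ((a + n + 1) / 2)))
        = 2 * β * c * Y * (Real.exp (-α * (a + n)) * Real.exp ((a + n + 1) / 2)) := by ring
      _ = 2 * β * c * Y * (Real.exp (1 / 2) * (Real.exp ((1 / 2 - α) * a)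
            * Real.exp ((1 / 2 - α) * n))) := by rw [h1]
      _ = 2 * β * c * Y * Real.exp (1 / 2) * Real.exp ((1 / 2 - α) * a)
            * Real.exp ((1 / 2 - α) * n) := by ring
  have hmain : muAlpha α β
      (ballTrunc c (R - y₁ - C) (0, y₁) ∩ ballTrunc c (R - y₁ - C) (t, y₂))
      ≤ ENNReal.ofReal (D / (1 - Real.exp (1 / 2 - α))) := by
    calc muAlpha α β (ballTrunc c (R - y₁ - C) (0, y₁) ∩ ballTrunc c (R - y₁ - C) (t, y₂))
        ≤ muAlpha α β (⋃ n : ℕ, (Set.Ioo (t - w n) (t + w n) ×ˢ Set.Ico (a + n) (a + n + 1))) :=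
          measure_mono hsub
      _ ≤ ∑' n : ℕ, muAlpha α β (Set.Ioo (t - w n) (t + w n) ×ˢ Set.Ico (a + n) (a + n + 1)) :=
          measure_iUnion_le _
      _ ≤ ∑' n : ℕ, ENNReal.ofReal (β * Real.exp (-α * (a + n)) * (2 * w n)) := by
          apply ENNReal.tsum_le_tsum
          intro n
          exact rect_bound α β t (w n) (a + n) hβ (by linarith) (by positivity)
      _ = ∑' n : ℕ, ENNReal.ofReal (D * (Real.exp (1 / 2 - α)) ^ n) := by
          exact tsum_congr fun n => by rw [hterm n]
      _ = ENNReal.ofReal (D / (1 - Real.exp (1 / 2 - α))) :=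
          geom_tsum D _ hD hr0.le hr1
  refine le_trans hmain (ENNReal.ofReal_le_ofReal ?_)
  -- real-number inequality
  have hexpa : Real.exp ((1 / 2 - α) * a) = t ^ (1 - 2 * α) * (c * Y) ^ (2 * α - 1) := by
    have h1 : (t / (c * Y)) ^ (1 - 2 * α) = Real.exp ((1 / 2 - α) * a) := by
      rw [Real.rpow_def_of_pos (div_pos ht hcY), hadef]
      congr 1
      ring
    rw [← h1, Real.div_rpow ht.le hcY.le,
      show (2 * α - 1 : ℝ) = -(1 - 2 * α) by ring, Real.rpow_neg hcY.le, div_eq_mul_inv]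
  have hcY2 : c * Y * (c * Y) ^ (2 * α - 1) = c ^ (2 * α) * Y ^ (2 * α) := by
    have h1 : c * Y * (c * Y) ^ (2 * α - 1) = (c * Y) ^ (2 * α) := by
      rw [show (2 * α : ℝ) = (2 * α - 1) + 1 by ring, Real.rpow_add hcY, Real.rpow_one]
      ring
    rw [h1, Real.mul_rpow hc.le hY.le]
  have hDnum : D = 2 * β * c ^ (2 * α) * Real.exp (1 / 2) * (t ^ (1 - 2 * α) * Y ^ (2 * α)) := by
    rw [hDdef, hexpa]
    linear_combination (2 * β * Real.exp (1 / 2) * t ^ (1 - 2 * α)) * hcY2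
  have hDeq : D / (1 - Real.exp (1 / 2 - α)) = K * (t ^ (1 - 2 * α) * Y ^ (2 * α)) := by
    rw [hDnum, hKdef]
    ring
  rw [hDeq]
  have hsecond : 0 ≤ Real.exp ((1 / 2 - α) * R) * Real.exp (y₁ / 2) ^ (2 * α) := by
    have := Real.rpow_nonneg (Real.exp_pos (y₁ / 2)).le (2 * α)
    positivity
  exact mul_le_mul_of_nonneg_left (le_add_of_nonneg_right hsecond) hK.le
end

section
/- Let α > 0 and β > 0, set c₀ := √3·β·(1 − e^{−8α})/α, and let μ_α be the measure on ℝ × [0,∞) with density β·e^{−αy} with respect to Lebesgue measure. Let y₀ ≥ 8, and let A be a Borel subset of ℝ × [0,∞) containing the rectangle [−e^{y₀/2}, e^{y₀/2}] × [0, y₀]. Then for every t ∈ [2y₀, 3·e^{y₀}], μ_α( B̄((0, y₀), t) ∩ A ) ≥ c₀·√(t/3), where B̄((0,y₀), t) denotes the closed Euclidean ball of radius t centered at the point (0, y₀) ∈ ℝ². -/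
open MeasureTheory

theorem stmt12 (α β y₀ : ℝ) (hα : 0 < α) (hβ : 0 < β) (hy₀ : 8 ≤ y₀)
    (A : Set (ℝ × ℝ)) (hA : MeasurableSet A) (hA' : A ⊆ {p : ℝ × ℝ | 0 ≤ p.2})
    (hrect :
      Set.Icc (-Real.exp (y₀ / 2)) (Real.exp (y₀ / 2)) ×ˢ Set.Icc (0 : ℝ) y₀ ⊆ A) :
    ∀ t ∈ Set.Icc (2 * y₀) (3 * Real.exp y₀),
      ENNReal.ofReal
          (Real.sqrt 3 * β * (1 - Real.exp (-(8 * α))) / α * Real.sqrt (t / 3)) ≤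
        muAlpha α β ({q : ℝ × ℝ | q.1 ^ 2 + (q.2 - y₀) ^ 2 ≤ t ^ 2} ∩ A) := by
  intro t ht
  obtain ⟨ht1, ht2⟩ := ht
  have ht16 : (16:ℝ) ≤ t := le_trans (by linarith) ht1
  have ht0 : (0:ℝ) < t := by linarith
  set s : ℝ := Real.sqrt t / 2 with hs_def
  have hsq : Real.sqrt t ^ 2 = t := Real.sq_sqrt ht0.le
  have hsqrt_pos : 0 < Real.sqrt t := Real.sqrt_pos.2 ht0
  have hs_pos : 0 < s := by positivity
  -- √t ≤ 2 * exp(y₀/2)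
  have hexp_sq : Real.exp (y₀ / 2) ^ 2 = Real.exp y₀ := by
    rw [sq, ← Real.exp_add]; ring_nf
  have hst_le : Real.sqrt t ≤ 2 * Real.exp (y₀ / 2) := by
    have h1 : t ≤ (2 * Real.exp (y₀ / 2)) ^ 2 := by
      have : (2 * Real.exp (y₀ / 2)) ^ 2 = 4 * Real.exp y₀ := by
        rw [mul_pow, hexp_sq]; ring
      rw [this]
      have := Real.exp_pos y₀
      linarith
    calc Real.sqrt t ≤ Real.sqrt ((2 * Real.exp (y₀ / 2)) ^ 2) := Real.sqrt_le_sqrt h1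
      _ = 2 * Real.exp (y₀ / 2) := Real.sqrt_sq (by positivity)
  have hs_le : s ≤ Real.exp (y₀ / 2) := by
    rw [hs_def]; linarith
  -- the rectangle
  set R : Set (ℝ × ℝ) := Set.Icc (-s) s ×ˢ Set.Icc (0:ℝ) 8 with hR_def
  have hRA : R ⊆ A := by
    refine subset_trans ?_ hrect
    apply Set.prod_mono
    · exact Set.Icc_subset_Icc (by linarith) hs_le
    · exact Set.Icc_subset_Icc le_rfl (by linarith)
  have hRball : R ⊆ {q : ℝ × ℝ | q.1 ^ 2 + (q.2 - y₀) ^ 2 ≤ t ^ 2} := by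
    rintro ⟨x, y⟩ ⟨⟨hx1, hx2⟩, ⟨hy1, hy2⟩⟩
    simp only [Set.mem_setOf_eq]
    have hx : x ^ 2 ≤ t / 4 := by
      have : x ^ 2 ≤ s ^ 2 := sq_le_sq' hx1 hx2
      have hs2 : s ^ 2 = t / 4 := by rw [hs_def, div_pow, hsq]; norm_num
      linarith
    have hy : (y - y₀) ^ 2 ≤ y₀ ^ 2 := by nlinarith
    have hy0t : y₀ ≤ t / 2 := by linarith
    have hy0pos : (0:ℝ) ≤ y₀ := by linarith
    nlinarith
  have hmono : muAlpha α β R ≤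
      muAlpha α β ({q : ℝ × ℝ | q.1 ^ 2 + (q.2 - y₀) ^ 2 ≤ t ^ 2} ∩ A) :=
    measure_mono (Set.subset_inter hRball hRA)
  refine le_trans ?_ hmono
  -- compute muAlpha α β R
  have hRmeas : MeasurableSet R := (measurableSet_Icc).prod measurableSet_Icc
  have hsub : R ⊆ {p : ℝ × ℝ | 0 ≤ p.2} := by
    rintro ⟨x, y⟩ ⟨_, hy1, _⟩; exact hy1
  have hdens : Measurable fun p : ℝ × ℝ => ENNReal.ofReal (β * Real.exp (-α * p.2)) := by
    apply Measurable.ennreal_ofReal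
    exact (measurable_const.mul ((measurable_const.mul measurable_snd).exp))
  have step1 : muAlpha α β R
      = ∫⁻ p in R, ENNReal.ofReal (β * Real.exp (-α * p.2)) ∂(volume : Measure (ℝ × ℝ)) := by
    rw [muAlpha, withDensity_apply _ hRmeas, Measure.restrict_restrict hRmeas,
      Set.inter_eq_left.mpr hsub]
  rw [step1]
  have step2 : (∫⁻ p in R, ENNReal.ofReal (β * Real.exp (-α * p.2))
        ∂(volume : Measure (ℝ × ℝ)))
      = (volume (Set.Icc (-s) s)) *
        ∫⁻ y in Set.Icc (0:ℝ) 8, ENNReal.ofReal (β * Real.exp (-α * y)) := by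
    rw [hR_def, Measure.volume_eq_prod, ← Measure.prod_restrict]
    simpa [lintegral_one] using MeasureTheory.lintegral_prod_mul
      (μ := volume.restrict (Set.Icc (-s) s)) (ν := volume.restrict (Set.Icc (0:ℝ) 8))
      (f := fun _ : ℝ => (1:ENNReal))
      (g := fun y : ℝ => ENNReal.ofReal (β * Real.exp (-α * y)))
      aemeasurable_const
      ((Measurable.ennreal_ofReal
        (measurable_const.mul ((measurable_const.mul measurable_id).exp))).aemeasurable)
  rw [step2]
  have hvol : volume (Set.Icc (-s) s) = ENNReal.ofReal (Real.sqrt t) := by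
    rw [Real.volume_Icc]
    congr 1
    rw [hs_def]; ring
  -- inner integral
  have hint : (∫⁻ y in Set.Icc (0:ℝ) 8, ENNReal.ofReal (β * Real.exp (-α * y)))
      = ENNReal.ofReal (β * (1 - Real.exp (-(8 * α))) / α) := by
    have hInteg : IntegrableOn (fun y : ℝ => β * Real.exp (-α * y)) (Set.Icc (0:ℝ) 8) := by
      exact (continuous_const.mul
        (Real.continuous_exp.comp (continuous_const.mul continuous_id))).integrableOn_Icc
    rw [← MeasureTheory.ofReal_integral_eq_lintegral_ofReal hInteg]
    · congr 1
      rw [MeasureTheory.integral_Icc_eq_integral_Ioc,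
        ← intervalIntegral.integral_of_le (by norm_num : (0:ℝ) ≤ 8)]
      have : ∫ y in (0:ℝ)..8, β * Real.exp (-α * y)
          = β * ∫ y in (0:ℝ)..8, Real.exp (-α * y) := by
        rw [intervalIntegral.integral_const_mul]
      rw [this]
      have hcomp : ∫ y in (0:ℝ)..8, Real.exp (-α * y)
          = (-α)⁻¹ • ∫ y in (-α * 0)..(-α * 8), Real.exp y := by
        rw [intervalIntegral.integral_comp_mul_left Real.exp (by linarith : (-α) ≠ 0)]
      rw [hcomp, integral_exp, smul_eq_mul, show -α * 0 = 0 by ring,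
        show -α * 8 = -(8 * α) by ring, Real.exp_zero, inv_neg]
      field_simp
      ring
    · filter_upwards with y
      simp only [Pi.zero_apply]
      positivity
  rw [hvol, hint, ← ENNReal.ofReal_mul (Real.sqrt_nonneg t)]
  apply ENNReal.ofReal_le_ofReal
  have h3 : Real.sqrt (t / 3) = Real.sqrt t / Real.sqrt 3 := Real.sqrt_div ht0.le 3
  rw [h3]
  have h3pos : (0:ℝ) < Real.sqrt 3 := Real.sqrt_pos.2 (by norm_num)
  have : Real.sqrt 3 * β * (1 - Real.exp (-(8 * α))) / α * (Real.sqrt t / Real.sqrt 3)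
      = Real.sqrt t * (β * (1 - Real.exp (-(8 * α))) / α) := by
    field_simp
  rw [this]
end

section
/- For every ε ∈ (0, 1/3) there exists C > 0 such that for every R > C, all r, r' ∈ [0, R] with r + r' > R + C, and every θ ∈ [0, π], the following hold with y := R − r and y' := R − r': (a) if θ ≤ 2(1 − ε)·e^{(y + y' − R)/2}, then cosh r · cosh r' − sinh r · sinh r' · cos θ ≤ cosh R; and (b) if cosh r · cosh r' − sinh r · sinh r' · cos θ ≤ cosh R, then θ ≤ 2(1 + ε)·e^{(y + y' − R)/2}. -/
set_option maxHeartbeats 1000000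

open Real

-- helper: exp(-x) ≤ 1/x for x > 0
lemma aux_exp_neg_le {x : ℝ} (hx : 0 < x) : Real.exp (-x) ≤ 1 / x := by
  rw [Real.exp_neg, one_div]
  exact inv_anti₀ hx (by linarith [Real.add_one_le_exp x])


lemma aux_sqrt {a b : ℝ} (ha : 0 ≤ a) (hb : 0 ≤ b) (h : a^2 ≤ b^2) : a ≤ b := by
  nlinarith

-- final elementary estimate: from sin x ≤ (1+ε/16)δ with δ small, get x ≤ (1+ε)δ
lemma aux_final (ε δ x : ℝ) (hε0 : 0 < ε) (hε3 : ε < 1/3) (hδpos : 0 < δ)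
    (hδsmall : δ ≤ ε/10) (hx0 : 0 ≤ x) (hxπ : x ≤ Real.pi / 2)
    (hs : Real.sin x ≤ (1 + ε/16) * δ) : x ≤ (1 + ε) * δ := by
  have hm0 : 0 < (1 + ε/16) * δ := by positivity
  have hm9 : (1 + ε/16) * δ ≤ ε / 9 := by
    have h1 : (1 + ε/16) * δ ≤ (49/48) * (ε/10) :=
      mul_le_mul (by linarith) hδsmall hδpos.le (by norm_num)
    linarith
  have hx1 : x ≤ 1 := by
    by_contra hgt
    push_neg at hgt
    have hmem1 : (1:ℝ) ∈ Set.Icc (-(Real.pi/2)) (Real.pi/2) := by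
      constructor <;> nlinarith [Real.pi_gt_three]
    have hmem2 : x ∈ Set.Icc (-(Real.pi/2)) (Real.pi/2) := by
      constructor <;> nlinarith [Real.pi_gt_three]
    have h1 : Real.sin 1 ≤ Real.sin x :=
      (Real.strictMonoOn_sin.monotoneOn) hmem1 hmem2 hgt.le
    have h2 : (3:ℝ)/4 < Real.sin 1 := by
      have := Real.sin_gt_sub_cube one_pos
      norm_num at this
      linarith
    nlinarith
  rcases eq_or_lt_of_le hx0 with h0 | h0
  · rw [← h0]; positivity
  · have hcube := Real.sin_gt_sub_cube h0
    have hx3 : x^3 ≤ x := by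
      nlinarith [mul_nonneg (mul_nonneg hx0 (sub_nonneg.mpr hx1)) (show (0:ℝ) ≤ 1 + x by linarith)]
    have hxm : x ≤ (4/3) * ((1 + ε/16) * δ) := by nlinarith
    have hx2 : x^2 ≤ ((4/3) * ((1 + ε/16) * δ))^2 := by nlinarith
    have hx3' : x^3 ≤ ((4/3) * ((1 + ε/16) * δ))^2 * x := by
      calc x^3 = x^2 * x := by ring
        _ ≤ ((4/3) * ((1 + ε/16) * δ))^2 * x := mul_le_mul_of_nonneg_right hx2 hx0
    have hc2 : ((4/3) * ((1 + ε/16) * δ))^2 / 4 ≤ ε/20 := by nlinarith [hm9, hm0]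
    have hA : x * (1 - ε/20) ≤ (1 + ε/16) * δ := by nlinarith
    nlinarith [mul_pos hδpos hε0, hδpos]

theorem stmt18 (ε : ℝ) (hε : ε ∈ Set.Ioo (0 : ℝ) (1 / 3)) :
    ∃ C : ℝ, 0 < C ∧ ∀ R : ℝ, C < R → ∀ r ∈ Set.Icc (0 : ℝ) R, ∀ r' ∈ Set.Icc (0 : ℝ) R,
      R + C < r + r' → ∀ θ ∈ Set.Icc (0 : ℝ) Real.pi,
        (θ ≤ 2 * (1 - ε) * Real.exp (((R - r) + (R - r') - R) / 2) →
          Real.cosh r * Real.cosh r' - Real.sinh r * Real.sinh r' * Real.cos θ ≤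
            Real.cosh R) ∧
        (Real.cosh r * Real.cosh r' - Real.sinh r * Real.sinh r' * Real.cos θ ≤
            Real.cosh R →
          θ ≤ 2 * (1 + ε) * Real.exp (((R - r) + (R - r') - R) / 2)) := by
  obtain ⟨hε0, hε3⟩ := hε
  refine ⟨20 / ε, by positivity, ?_⟩
  intro R hR r hr r' hr' hsum θ hθ
  obtain ⟨hr0, hrR⟩ := hr
  obtain ⟨hr'0, hr'R⟩ := hr'
  obtain ⟨hθ0, hθπ⟩ := hθ
  have hC0 : (0:ℝ) < 20 / ε := by positivity
  obtain ⟨δ, hδdef⟩ : ∃ d : ℝ, d = Real.exp (((R - r) + (R - r') - R) / 2) := ⟨_, rfl⟩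
  rw [← hδdef]
  have hδpos : 0 < δ := hδdef ▸ Real.exp_pos _
  have hδsq : δ ^ 2 = Real.exp (R - r - r') := by
    rw [hδdef, sq, ← Real.exp_add]; ring_nf
  -- δ small
  have hδsmall : δ ≤ ε / 10 := by
    have h1 : ((R - r) + (R - r') - R) / 2 ≤ -(10/ε) := by
      have hhalf : (10:ℝ)/ε = (20/ε)/2 := by ring
      linarith
    calc δ = Real.exp (((R - r) + (R - r') - R) / 2) := hδdef
      _ ≤ Real.exp (-(10/ε)) := Real.exp_le_exp.mpr h1
      _ ≤ 1 / (10/ε) := aux_exp_neg_le (by positivity)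
      _ = ε / 10 := by field_simp
  -- main identity
  have hsin0 : 0 ≤ Real.sin (θ/2) :=
    Real.sin_nonneg_of_nonneg_of_le_pi (by linarith) (by linarith [Real.pi_pos])
  have hiden : Real.cosh r * Real.cosh r' - Real.sinh r * Real.sinh r' * Real.cos θ
      = Real.cosh (r - r') + 2 * Real.sinh r * Real.sinh r' * Real.sin (θ/2) ^ 2 := by
    have h2 := Real.sin_sq_eq_half_sub (θ/2)
    rw [show 2 * (θ/2) = θ by ring] at h2
    have hcos : Real.cos θ = 1 - 2 * Real.sin (θ/2) ^ 2 := by linarith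
    rw [Real.cosh_sub, hcos]; ring
  have hsh_nonneg : 0 ≤ Real.sinh r := Real.sinh_nonneg_iff.mpr hr0
  have hsh_nonneg' : 0 ≤ Real.sinh r' := Real.sinh_nonneg_iff.mpr hr'0
  have hexpR : Real.exp r * Real.exp r' * Real.exp (R - r - r') = Real.exp R := by
    rw [← Real.exp_add, ← Real.exp_add]; ring_nf
  have heC : Real.exp (-(20/ε)) ≤ ε / 20 := by
    calc Real.exp (-(20/ε)) ≤ 1 / (20/ε) := aux_exp_neg_le hC0
      _ = ε / 20 := by field_simp
  constructor
  · -- part (a)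
    intro hθle
    have hsinle : Real.sin (θ/2) ≤ (1 - ε) * δ := by
      have h1 : Real.sin (θ/2) ≤ θ/2 := by
        rcases eq_or_lt_of_le (show (0:ℝ) ≤ θ/2 by linarith) with h0 | h0
        · rw [← h0]; simp
        · exact (Real.sin_lt h0).le
      linarith
    have hsinsq : Real.sin (θ/2) ^ 2 ≤ (1 - ε)^2 * δ^2 := by nlinarith
    have hsh_ub : Real.sinh r ≤ Real.exp r / 2 := by
      rw [Real.sinh_eq]; linarith [Real.exp_pos (-r)]
    have hsh_ub' : Real.sinh r' ≤ Real.exp r' / 2 := by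
      rw [Real.sinh_eq]; linarith [Real.exp_pos (-r')]
    have hterm : 2 * Real.sinh r * Real.sinh r' * Real.sin (θ/2) ^ 2
        ≤ (1 - ε)^2 * Real.exp R / 2 := by
      have step : 2 * Real.sinh r * Real.sinh r' * Real.sin (θ/2) ^ 2
          ≤ 2 * (Real.exp r / 2) * (Real.exp r' / 2) * ((1 - ε)^2 * δ^2) := by
        have e1 : Real.sinh r * Real.sinh r' ≤ (Real.exp r / 2) * (Real.exp r' / 2) :=
          mul_le_mul hsh_ub hsh_ub' hsh_nonneg' (by positivity)
        nlinarith [sq_nonneg (Real.sin (θ/2)), mul_nonneg hsh_nonneg hsh_nonneg',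
          Real.exp_pos r, Real.exp_pos r']
      calc 2 * Real.sinh r * Real.sinh r' * Real.sin (θ/2) ^ 2
          ≤ 2 * (Real.exp r / 2) * (Real.exp r' / 2) * ((1 - ε)^2 * δ^2) := step
        _ = (1 - ε)^2 * (Real.exp r * Real.exp r' * Real.exp (R - r - r')) / 2 := by
            rw [hδsq]; ring
        _ = (1 - ε)^2 * Real.exp R / 2 := by rw [hexpR]
    have hcosh_ub : Real.cosh (r - r') ≤ Real.exp R * (ε / 20) := by
      have h1 : r - r' ≤ R - 20/ε := by linarith
      have h2 : r' - r ≤ R - 20/ε := by linarith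
      have h3 : Real.exp (R - 20/ε) = Real.exp R * Real.exp (-(20/ε)) := by
        rw [← Real.exp_add]; ring_nf
      have h4 : Real.cosh (r - r') ≤ Real.exp (R - 20/ε) := by
        rw [Real.cosh_eq]
        have := Real.exp_le_exp.mpr h1
        have := Real.exp_le_exp.mpr (show -(r - r') ≤ R - 20/ε by linarith)
        linarith
      calc Real.cosh (r - r') ≤ Real.exp (R - 20/ε) := h4
        _ = Real.exp R * Real.exp (-(20/ε)) := h3
        _ ≤ Real.exp R * (ε/20) := by
            exact mul_le_mul_of_nonneg_left heC (Real.exp_pos R).le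
    have hcoshR_lb : Real.exp R / 2 ≤ Real.cosh R := by
      rw [Real.cosh_eq]; linarith [Real.exp_pos (-R)]
    have hfinal : Real.exp R * (ε/20) + (1-ε)^2 * Real.exp R / 2 ≤ Real.exp R / 2 := by
      nlinarith [mul_nonneg (mul_nonneg (Real.exp_pos R).le hε0.le)
        (show (0:ℝ) ≤ 19/20 - ε/2 by linarith)]
    rw [hiden]
    linarith [hterm, hcosh_ub, hcoshR_lb, hfinal]
  · -- part (b)
    intro hle
    obtain ⟨u, hudef⟩ : ∃ v : ℝ, v = Real.exp (-(40/ε)) := ⟨_, rfl⟩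
    have hu0 : 0 < u := hudef ▸ Real.exp_pos _
    have hu : u ≤ ε / 40 := by
      rw [hudef]
      calc Real.exp (-(40/ε)) ≤ 1 / (40/ε) := aux_exp_neg_le (by positivity)
        _ = ε / 40 := by field_simp
    have hu120 : u ≤ 1/120 := by nlinarith
    have hrC : 20/ε ≤ r := by linarith
    have hr'C : 20/ε ≤ r' := by linarith
    -- sinh lower bounds
    have hsl : Real.exp r * (1 - u) / 2 ≤ Real.sinh r := by
      rw [Real.sinh_eq]
      have : Real.exp (-r) ≤ Real.exp r * u := by
        rw [hudef, ← Real.exp_add]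
        refine Real.exp_le_exp.mpr ?_
        have h40 : (40:ℝ)/ε = 2*(20/ε) := by ring
        linarith
      linarith
    have hsl' : Real.exp r' * (1 - u) / 2 ≤ Real.sinh r' := by
      rw [Real.sinh_eq]
      have : Real.exp (-r') ≤ Real.exp r' * u := by
        rw [hudef, ← Real.exp_add]
        refine Real.exp_le_exp.mpr ?_
        have h40 : (40:ℝ)/ε = 2*(20/ε) := by ring
        linarith
      linarith
    have hcoshR_ub : Real.cosh R ≤ Real.exp R * (1 + u) / 2 := by
      rw [Real.cosh_eq]
      have : Real.exp (-R) ≤ Real.exp R * u := by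
        rw [hudef, ← Real.exp_add]
        refine Real.exp_le_exp.mpr ?_
        have h40 : (40:ℝ)/ε = 2*(20/ε) := by ring
        linarith
      linarith
    have hcosh1 : (1:ℝ) ≤ Real.cosh (r - r') := Real.one_le_cosh _
    -- key: sin² bound
    have hkey : 2 * Real.sinh r * Real.sinh r' * Real.sin (θ/2) ^ 2
        ≤ Real.exp R * (1 + u) / 2 := by
      rw [hiden] at hle
      linarith
    have hprod : Real.exp r * Real.exp r' * (1 - u)^2 * Real.sin (θ/2) ^ 2 / 2
        ≤ Real.exp R * (1 + u) / 2 := by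
      have hA : 0 ≤ Real.exp r * (1 - u) / 2 :=
        div_nonneg (mul_nonneg (Real.exp_pos r).le (by linarith)) (by norm_num)
      have hB : 0 ≤ Real.exp r' * (1 - u) / 2 :=
        div_nonneg (mul_nonneg (Real.exp_pos r').le (by linarith)) (by norm_num)
      have e1 : (Real.exp r * (1 - u) / 2) * (Real.exp r' * (1 - u) / 2)
          ≤ Real.sinh r * Real.sinh r' :=
        mul_le_mul hsl hsl' hB (le_trans hA hsl)
      nlinarith [sq_nonneg (Real.sin (θ/2))]
    -- get sin² ≤ (1+ε/16)² δ²
    have hsinsq : Real.sin (θ/2) ^ 2 ≤ ((1 + ε/16) * δ)^2 := by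
      have hpoly : (1 + u) ≤ (1 + ε/16)^2 * (1 - u)^2 := by
        have e1 : 1 - 2*u ≤ (1 - u)^2 := by nlinarith [sq_nonneg u]
        have e2 : 1 + ε/8 ≤ (1 + ε/16)^2 := by nlinarith [sq_nonneg ε]
        have e3 : (1 + ε/8) * (1 - 2*u) ≤ (1 + ε/16)^2 * (1 - u)^2 :=
          mul_le_mul e2 e1 (by linarith) (by positivity)
        have e4 : ε * u ≤ ε * (1/120) := mul_le_mul_of_nonneg_left hu120 hε0.le
        nlinarith [e3, e4]
      have h1 : Real.exp r * Real.exp r' * (1 - u)^2 * Real.sin (θ/2) ^ 2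
          ≤ Real.exp R * ((1 + ε/16)^2 * (1 - u)^2) := by
        have hmono := mul_le_mul_of_nonneg_left hpoly (Real.exp_pos R).le
        linarith [hprod]
      have h2 : Real.exp r * Real.exp r' * Real.sin (θ/2) ^ 2
          ≤ Real.exp R * (1 + ε/16)^2 := by
        have hpos : (0:ℝ) < (1 - u)^2 := pow_pos (by linarith) 2
        refine le_of_mul_le_mul_right ?_ hpos
        nlinarith [h1]
      have hδe : Real.exp R = Real.exp r * Real.exp r' * δ^2 := by
        rw [hδsq, ← hexpR]
      rw [hδe] at h2
      have hep : 0 < Real.exp r * Real.exp r' := by positivity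
      calc Real.sin (θ/2) ^ 2
          ≤ (1 + ε/16)^2 * δ^2 := by
            refine le_of_mul_le_mul_left ?_ hep
            linarith [h2]
        _ = ((1 + ε/16) * δ)^2 := by ring
    have hsinm : Real.sin (θ/2) ≤ (1 + ε/16) * δ :=
      aux_sqrt hsin0 (by positivity) hsinsq
    have hxfin : θ/2 ≤ (1 + ε) * δ :=
      aux_final ε δ (θ/2) hε0 hε3 hδpos hδsmall (by linarith) (by linarith) hsinm
    linarith
end
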